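/- arXiv:1901.04064 — 6 statements merged into one kernel-verified Lean document; each statement's English description precedes it below -/
import Mathlib

section
/- Let N be a phylogenetic network on X and let a, b be distinct leaves with parents p_a and p_b respectively. Then γ(a) ⊆ γ(b) if and only if p_b is reachable from p_a by a directed path, where γ(x) is the set of non-leaf vertices from which x is reachable. -/
/-- A finite directed graph on natural-number vertices, with no parallel arcs
(arcs form a `Finset` of ordered pairs). -/
structure Digraph' where
  V : Finset ℕ
  A : Finset (ℕ × ℕ)
  mem_V : ∀ e ∈ A, e.1 ∈ V ∧ e.2 ∈ V

namespace Digraph'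

def inDeg (N : Digraph') (v : ℕ) : ℕ := (N.A.filter (fun e => e.2 = v)).card

def outDeg (N : Digraph') (v : ℕ) : ℕ := (N.A.filter (fun e => e.1 = v)).card

/-- Reachability by a directed path (including paths of length 0). -/
def Reach (N : Digraph') : ℕ → ℕ → Prop :=
  Relation.ReflTransGen (fun u v => (u, v) ∈ N.A)

def Acyclic (N : Digraph') : Prop := ∀ u v, (u, v) ∈ N.A → ¬ N.Reach v u

def IsLeaf (N : Digraph') (v : ℕ) : Prop := v ∈ N.V ∧ N.outDeg v = 0

def IsTreeVertex (N : Digraph') (v : ℕ) : Prop :=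
  v ∈ N.V ∧ N.inDeg v = 1 ∧ N.outDeg v = 2

def IsRet (N : Digraph') (v : ℕ) : Prop :=
  v ∈ N.V ∧ N.inDeg v = 2 ∧ N.outDeg v = 1

/-- `N` is a (binary) phylogenetic network on leaf set `X`. -/
structure IsPhylo (N : Digraph') (X : Finset ℕ) : Prop where
  acyclic : N.Acyclic
  X_sub : X ⊆ N.V
  leafSet : ∀ v ∈ N.V, (N.outDeg v = 0 ↔ v ∈ X)
  root : ∃ ρ ∈ N.V, N.inDeg ρ = 0 ∧ N.outDeg ρ = 2 ∧ ∀ v ∈ N.V, N.Reach ρ v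
  degrees : ∀ v ∈ N.V,
    (N.inDeg v = 0 ∧ N.outDeg v = 2) ∨ (N.inDeg v = 1 ∧ N.outDeg v = 0) ∨
    (N.inDeg v = 1 ∧ N.outDeg v = 2) ∨ (N.inDeg v = 2 ∧ N.outDeg v = 1)

/-- The degenerate single-vertex network. -/
def IsSingle (N : Digraph') : Prop := ∃ x, N.V = {x} ∧ N.A = ∅

/-- `{a, b}` is a cherry: two distinct leaves with a common parent. -/
def IsCherry (N : Digraph') (a b : ℕ) : Prop :=
  a ≠ b ∧ N.IsLeaf a ∧ N.IsLeaf b ∧ ∃ p, (p, a) ∈ N.A ∧ (p, b) ∈ N.A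

/-- `{a, b}` is a reticulated cherry with `b` the reticulation leaf. -/
def IsRetCherry (N : Digraph') (a b : ℕ) : Prop :=
  a ≠ b ∧ N.IsLeaf a ∧ N.IsLeaf b ∧
  ∃ pa pb, (pa, a) ∈ N.A ∧ (pb, b) ∈ N.A ∧ N.inDeg pb = 2 ∧ (pa, pb) ∈ N.A

/-- `N'` is obtained from `N` by reducing the leaf `b` of the cherry `{a, b}`:
delete `b` and suppress the resulting in-degree-1 out-degree-1 vertex
(if the common parent is the root, delete `b` and the root, leaving the single
vertex `a`). -/
def ReduceCherry (N N' : Digraph') (a b : ℕ) : Prop :=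
  N.IsCherry a b ∧ ∃ p, (p, a) ∈ N.A ∧ (p, b) ∈ N.A ∧
    ((N.inDeg p = 0 ∧ N'.V = {a} ∧ N'.A = ∅) ∨
     (∃ u, (u, p) ∈ N.A ∧ N'.V = (N.V.erase b).erase p ∧
        N'.A = insert (u, a) (((N.A.erase (u, p)).erase (p, a)).erase (p, b))))

/-- `N'` is obtained from `N` by cutting the reticulated cherry `{a, b}` with `b`
the reticulation leaf: delete the reticulation arc from the parent of `a` to the
parent of `b`, and suppress the two resulting in-degree-1 out-degree-1 vertices. -/
def CutRetCherry (N N' : Digraph') (a b : ℕ) : Prop :=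
  N.IsRetCherry a b ∧ ∃ pa pb ua q,
    (pa, a) ∈ N.A ∧ (pb, b) ∈ N.A ∧ N.inDeg pb = 2 ∧ (pa, pb) ∈ N.A ∧
    (ua, pa) ∈ N.A ∧ (q, pb) ∈ N.A ∧ q ≠ pa ∧
    N'.V = (N.V.erase pa).erase pb ∧
    N'.A = insert (ua, a) (insert (q, b)
      (((((N.A.erase (pa, pb)).erase (ua, pa)).erase (pa, a)).erase (q, pb)).erase (pb, b)))

/-- A single cherry reduction. -/
def CherryStep (N N' : Digraph') : Prop :=
  ∃ a b, ReduceCherry N N' a b ∨ CutRetCherry N N' a b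

/-- `N` is an orchard network: some sequence of cherry reductions reduces it to a
single vertex. -/
def IsOrchard (N : Digraph') : Prop :=
  ∃ N', Relation.ReflTransGen CherryStep N N' ∧ IsSingle N'

/-- The ancestral set `γ(x)`: the non-leaf vertices from which `x` is reachable. -/
def gamma (N : Digraph') (x : ℕ) : Set ℕ :=
  {v | v ∈ N.V ∧ N.outDeg v ≠ 0 ∧ N.Reach v x}

/-- The number of directed paths in `N` from `u` to `x` (a path is recorded as the
list of its vertices; the single-vertex path counts when `u = x`). -/
noncomputable def numPaths (N : Digraph') (u x : ℕ) : ℕ :=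
  Set.ncard {l : List ℕ | l.head? = some u ∧ l.getLast? = some x ∧
    l.Chain' (fun p q => (p, q) ∈ N.A)}

/-- Tree-sibling: every reticulation has a parent that is also the parent of a
tree vertex or a leaf. -/
def TreeSibling (N : Digraph') : Prop :=
  ∀ v ∈ N.V, N.inDeg v = 2 → ∃ p w, (p, v) ∈ N.A ∧ (p, w) ∈ N.A ∧ w ≠ v ∧
    (N.IsTreeVertex w ∨ N.IsLeaf w)

/-- Time-consistent: there is a temporal labelling of the vertices. -/
def TimeConsistent (N : Digraph') : Prop :=
  ∃ t : ℕ → ℕ, ∀ u v, (u, v) ∈ N.A →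
    (N.inDeg v = 2 → t u = t v) ∧ (N.inDeg v ≠ 2 → t u < t v)

/-- Tree-child: every non-leaf vertex has a child that is a tree vertex or a leaf
(equivalently, a child of in-degree one). -/
def TreeChild (N : Digraph') : Prop :=
  ∀ v ∈ N.V, N.outDeg v ≠ 0 → ∃ w, (v, w) ∈ N.A ∧ N.inDeg w = 1

end Digraph'

open Digraph'

lemma in_unique (N : Digraph') {v p q : ℕ} (h : N.inDeg v = 1)
    (hp : (p, v) ∈ N.A) (hq : (q, v) ∈ N.A) : p = q := by
  have h1 : (p, v) ∈ N.A.filter (fun e => e.2 = v) := by simp [hp]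
  have h2 : (q, v) ∈ N.A.filter (fun e => e.2 = v) := by simp [hq]
  have := Finset.card_le_one.mp (le_of_eq h) _ h1 _ h2
  exact congrArg Prod.fst this

lemma reach_last (N : Digraph') {v x : ℕ} (h : N.Reach v x) (hne : v ≠ x) :
    ∃ u, N.Reach v u ∧ (u, x) ∈ N.A := by
  rcases Relation.ReflTransGen.cases_tail h with h0 | ⟨u, h1, h2⟩
  · exact absurd h0.symm hne
  · exact ⟨u, h1, h2⟩

/-- for distinct leaves `a, b` with parents `pa, pb`,
`γ(a) ⊆ γ(b)` iff `pb` is reachable from `pa`. -/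
theorem stmt_2 (N : Digraph') (X : Finset ℕ) (a b pa pb : ℕ)
    (h : N.IsPhylo X) (ha : a ∈ X) (hb : b ∈ X) (hab : a ≠ b)
    (hpa : (pa, a) ∈ N.A) (hpb : (pb, b) ∈ N.A) :
    N.gamma a ⊆ N.gamma b ↔ N.Reach pa pb := by
  have hbV : b ∈ N.V := h.X_sub hb
  have haV : a ∈ N.V := h.X_sub ha
  have hbo : N.outDeg b = 0 := (h.leafSet b hbV).mpr hb
  have hao : N.outDeg a = 0 := (h.leafSet a haV).mpr ha
  have hbin : N.inDeg b = 1 := by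
    rcases h.degrees b hbV with ⟨_, h2⟩ | ⟨h1, _⟩ | ⟨h1, h2⟩ | ⟨h1, h2⟩ <;> omega
  have hain : N.inDeg a = 1 := by
    rcases h.degrees a haV with ⟨_, h2⟩ | ⟨h1, _⟩ | ⟨h1, h2⟩ | ⟨h1, h2⟩ <;> omega
  have hpaV : pa ∈ N.V := (N.mem_V _ hpa).1
  have hpao : N.outDeg pa ≠ 0 := by
    have : 0 < N.outDeg pa := Finset.card_pos.mpr ⟨(pa, a), by simp [hpa]⟩
    omega
  constructor
  · intro hsub
    have hmem : pa ∈ N.gamma b := hsub ⟨hpaV, hpao, Relation.ReflTransGen.single hpa⟩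
    obtain ⟨_, _, hr⟩ := hmem
    have hne : pa ≠ b := by intro e; rw [e] at hpao; exact hpao hbo
    obtain ⟨u, hru, hub⟩ := reach_last N hr hne
    rwa [in_unique N hbin hub hpb] at hru
  · rintro hr v ⟨hvV, hvo, hva⟩
    have hne : v ≠ a := by intro e; rw [e] at hvo; exact hvo hao
    obtain ⟨u, hru, hua⟩ := reach_last N hva hne
    rw [in_unique N hain hua hpa] at hru
    exact ⟨hvV, hvo, (hru.trans hr).tail hpb⟩
end

section
/- Let N be a phylogenetic network on X and let a, b be distinct leaves. Then {a, b} is a cherry of N (i.e., a and b have the same parent) if and only if γ(a) = γ(b), where γ(x) denotes the set of non-leaf vertices from which x is reachable. -/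
open Digraph'

lemma aux_outDeg_ne (N : Digraph') {u v : ℕ} (huv : (u,v) ∈ N.A) : N.outDeg u ≠ 0 := by
  intro h0
  rw [Digraph'.outDeg, Finset.card_eq_zero, Finset.eq_empty_iff_forall_notMem] at h0
  exact h0 (u,v) (Finset.mem_filter.mpr ⟨huv, rfl⟩)

lemma aux_parent_unique (N : Digraph') {p q v : ℕ} (h1 : N.inDeg v = 1)
    (hp : (p,v) ∈ N.A) (hq : (q,v) ∈ N.A) : p = q := by
  have := Finset.card_le_one.mp (le_of_eq h1) (p,v)
    (Finset.mem_filter.mpr ⟨hp, rfl⟩) (q,v) (Finset.mem_filter.mpr ⟨hq, rfl⟩)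
  exact (Prod.mk.injEq _ _ _ _ ▸ this).1

lemma aux_leaf_inDeg (N : Digraph') (X : Finset ℕ) (h : N.IsPhylo X) {a : ℕ}
    (ha : a ∈ X) : N.inDeg a = 1 ∧ N.outDeg a = 0 := by
  have haV : a ∈ N.V := h.X_sub ha
  have hout : N.outDeg a = 0 := (h.leafSet a haV).mpr ha
  rcases h.degrees a haV with ⟨_, h2⟩ | ⟨h1, _⟩ | ⟨_, h2⟩ | ⟨_, h2⟩ <;>
    simp_all

lemma aux_reach_tail (N : Digraph') {v a : ℕ} (hr : N.Reach v a) (hva : v ≠ a) :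
    ∃ w, N.Reach v w ∧ (w, a) ∈ N.A := by
  rcases Relation.ReflTransGen.cases_tail hr with h | ⟨w, hw, harc⟩
  · exact absurd h.symm hva
  · exact ⟨w, hw, harc⟩


/-- distinct leaves `a, b` form a cherry iff `γ(a) = γ(b)`. -/
theorem stmt_3 (N : Digraph') (X : Finset ℕ) (a b : ℕ)
    (h : N.IsPhylo X) (ha : a ∈ X) (hb : b ∈ X) (hab : a ≠ b) :
    N.IsCherry a b ↔ N.gamma a = N.gamma b := by

  have hdA := aux_leaf_inDeg N X h ha
  have hdB := aux_leaf_inDeg N X h hb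
  constructor
  · rintro ⟨-, -, -, p, hpa, hpb⟩
    have key : ∀ x y : ℕ, x ∈ X → (p, x) ∈ N.A → (p, y) ∈ N.A →
        N.gamma x ⊆ N.gamma y := by
      intro x y hx hpx hpy v hv
      obtain ⟨hvV, hvout, hvr⟩ := hv
      have hvx : v ≠ x := by
        intro e; subst e
        exact hvout ((aux_leaf_inDeg N X h hx).2)
      obtain ⟨w, hvw, hwx⟩ := aux_reach_tail N hvr hvx
      have hwp : w = p := aux_parent_unique N (aux_leaf_inDeg N X h hx).1 hwx hpx
      subst hwp
      exact ⟨hvV, hvout, hvw.tail hpy⟩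
    exact Set.Subset.antisymm (key a b ha hpa hpb) (key b a hb hpb hpa)
  · intro hg
    -- parents of a and b
    have hAne : (N.A.filter (fun e => e.2 = a)).Nonempty := by
      rw [← Finset.card_pos, ← Digraph'.inDeg, hdA.1]; norm_num
    obtain ⟨ea, hea⟩ := hAne
    obtain ⟨heaA, hea2⟩ := Finset.mem_filter.mp hea
    set pa := ea.1 with hpa_def
    have hpaA : (pa, a) ∈ N.A := by
      have : ea = (pa, a) := by
        ext <;> simp [hpa_def, hea2]
      rwa [this] at heaA
    have hBne : (N.A.filter (fun e => e.2 = b)).Nonempty := by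
      rw [← Finset.card_pos, ← Digraph'.inDeg, hdB.1]; norm_num
    obtain ⟨eb, heb⟩ := hBne
    obtain ⟨hebA, heb2⟩ := Finset.mem_filter.mp heb
    set pb := eb.1 with hpb_def
    have hpbA : (pb, b) ∈ N.A := by
      have : eb = (pb, b) := by
        ext <;> simp [hpb_def, heb2]
      rwa [this] at hebA
    have hpaV : pa ∈ N.V := (N.mem_V _ hpaA).1
    have hpbV : pb ∈ N.V := (N.mem_V _ hpbA).1
    have hpaout : N.outDeg pa ≠ 0 := aux_outDeg_ne N hpaA
    have hpbout : N.outDeg pb ≠ 0 := aux_outDeg_ne N hpbA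
    have hpaGa : pa ∈ N.gamma a :=
      ⟨hpaV, hpaout, Relation.ReflTransGen.single hpaA⟩
    have hpbGb : pb ∈ N.gamma b :=
      ⟨hpbV, hpbout, Relation.ReflTransGen.single hpbA⟩
    have hpaGb : pa ∈ N.gamma b := hg ▸ hpaGa
    have hpbGa : pb ∈ N.gamma a := hg.symm ▸ hpbGb
    -- Reach pa pb
    have hpaneb : pa ≠ b := fun e => hpaout (e ▸ hdB.2)
    obtain ⟨w, hw, hwb⟩ := aux_reach_tail N hpaGb.2.2 hpaneb
    have hw' : w = pb := aux_parent_unique N hdB.1 hwb hpbA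
    have hreach1 : N.Reach pa pb := hw' ▸ hw
    have hpbnea : pb ≠ a := fun e => hpbout (e ▸ hdA.2)
    obtain ⟨w2, hw2, hw2a⟩ := aux_reach_tail N hpbGa.2.2 hpbnea
    have hw2' : w2 = pa := aux_parent_unique N hdA.1 hw2a hpaA
    have hreach2 : N.Reach pb pa := hw2' ▸ hw2
    have hpp : pa = pb := by
      by_contra hne
      rcases Relation.ReflTransGen.cases_head hreach1 with h' | ⟨c, hc, hcr⟩
      · exact hne h'
      · exact h.acyclic pa c hc (hcr.trans hreach2)
    refine ⟨hab, ⟨h.X_sub ha, hdA.2⟩, ⟨h.X_sub hb, hdB.2⟩, pa, hpaA, hpp ▸ hpbA⟩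
end

section
/- Every tree-sibling time-consistent phylogenetic network with at least one reticulation has either a cherry or a reticulated cherry. -/
open Digraph'

/-!
Let `t` be a temporal labelling and `m` the latest time of a reticulation. In a finite acyclic
network every nonempty vertex set has a member none of whose children lies in it.

If some non-leaf vertex is later than `m`, take such a vertex `v` with no child of the same kind.
Its children are not reticulations (they would share the time of `v`), so they are later still,
hence leaves; `v` is not a reticulation either, so it has two children and they form a cherry.

Otherwise every vertex later than `m` is a leaf. Take a reticulation `r` at time `m` with no
child that is a reticulation at time `m`. Its child `c` is then no reticulation, so it is later
than `m`: a leaf. By tree-sibling, a parent `p` of `r` has a child `w ≠ r` of in-degree one;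
as `t p = m`, also `w` is later than `m`, hence a leaf, and `{w, c}` is a reticulated cherry.
-/

namespace Digraph'

variable {N : Digraph'}

def IsTemporalLabelling (N : Digraph') (t : ℕ → ℕ) : Prop :=
  ∀ u v, (u, v) ∈ N.A → (N.inDeg v = 2 → t u = t v) ∧ (N.inDeg v ≠ 2 → t u < t v)

lemma exists_arc_of_outDeg_ne_zero {v : ℕ} (hv : N.outDeg v ≠ 0) : ∃ c, (v, c) ∈ N.A := by
  obtain ⟨⟨u, c⟩, he⟩ := Finset.card_ne_zero.mp hv
  obtain ⟨hA, rfl⟩ := Finset.mem_filter.mp he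
  exact ⟨c, hA⟩

lemma exists_ne_arcs_of_outDeg_eq_two {v : ℕ} (hv : N.outDeg v = 2) :
    ∃ x y, x ≠ y ∧ (v, x) ∈ N.A ∧ (v, y) ∈ N.A := by
  obtain ⟨⟨u, x⟩, ⟨u', y⟩, hne, hs⟩ := Finset.card_eq_two.mp hv
  have hmem : ∀ e ∈ ({(u, x), (u', y)} : Finset (ℕ × ℕ)), e ∈ N.A ∧ e.1 = v :=
    fun e he => Finset.mem_filter.mp (hs ▸ he)
  obtain ⟨hx, rfl⟩ := hmem (u, x) (by simp)
  obtain ⟨hy, rfl⟩ := hmem (u', y) (by simp)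
  exact ⟨x, y, fun hxy => hne (by rw [hxy]), hx, hy⟩

lemma two_le_inDeg_of_arcs {p q c : ℕ} (hp : (p, c) ∈ N.A) (hq : (q, c) ∈ N.A)
    (hne : p ≠ q) : 2 ≤ N.inDeg c :=
  Finset.one_lt_card.mpr
    ⟨(p, c), Finset.mem_filter.mpr ⟨hp, rfl⟩, (q, c), Finset.mem_filter.mpr ⟨hq, rfl⟩,
      by simpa using hne⟩

namespace Acyclic

lemma ne_of_arc (hN : N.Acyclic) {u v : ℕ} (h : (u, v) ∈ N.A) : u ≠ v := by
  rintro rfl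
  exact hN u u h .refl

/-- Take a vertex of `S` reaching the fewest vertices: a child reaches strictly fewer. -/
lemma exists_mem_forall_arc_not_mem (hN : N.Acyclic) {S : Finset ℕ} (hS : S.Nonempty) :
    ∃ v ∈ S, ∀ c, (v, c) ∈ N.A → c ∉ S := by
  classical
  obtain ⟨v, hvS, hmin⟩ := S.exists_min_image (fun v => (N.V.filter (N.Reach v)).card) hS
  refine ⟨v, hvS, fun c hvc hcS => (hmin c hcS).not_gt (Finset.card_lt_card ?_)⟩
  have hsub : N.V.filter (N.Reach c) ⊆ N.V.filter (N.Reach v) := fun w hw => by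
    obtain ⟨hwV, hcw⟩ := Finset.mem_filter.mp hw
    exact Finset.mem_filter.mpr ⟨hwV, .head hvc hcw⟩
  refine (Finset.ssubset_iff_of_subset hsub).mpr ⟨v, ?_, ?_⟩
  · exact Finset.mem_filter.mpr ⟨(N.mem_V _ hvc).1, .refl⟩
  · exact fun hv => hN v c hvc (Finset.mem_filter.mp hv).2

end Acyclic

namespace IsPhylo

variable {X : Finset ℕ} {v : ℕ}

lemma inDeg_eq_one_of_outDeg_eq_zero (h : N.IsPhylo X) (hv : v ∈ N.V)
    (ho : N.outDeg v = 0) : N.inDeg v = 1 := by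
  rcases h.degrees v hv with hd | hd | hd | hd <;> omega

lemma outDeg_eq_one_of_inDeg_eq_two (h : N.IsPhylo X) (hv : v ∈ N.V)
    (hi : N.inDeg v = 2) : N.outDeg v = 1 := by
  rcases h.degrees v hv with hd | hd | hd | hd <;> omega

lemma outDeg_eq_two (h : N.IsPhylo X) (hv : v ∈ N.V) (ho : N.outDeg v ≠ 0)
    (hi : N.inDeg v ≠ 2) : N.outDeg v = 2 := by
  rcases h.degrees v hv with hd | hd | hd | hd <;> omega

end IsPhylo

section Temporal

variable {X : Finset ℕ} {t : ℕ → ℕ} {m : ℕ}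

lemma IsTemporalLabelling.lt_of_arc (ht : N.IsTemporalLabelling t)
    (hret : ∀ v ∈ N.V, N.inDeg v = 2 → t v ≤ m) {u v : ℕ} (huv : (u, v) ∈ N.A)
    (hu : m < t u) : t u < t v := by
  by_cases hv : N.inDeg v = 2
  · have := hret v (N.mem_V _ huv).2 hv
    have := (ht u v huv).1 hv
    omega
  · exact (ht u v huv).2 hv

lemma exists_isCherry_of_lt (h : N.IsPhylo X) (ht : N.IsTemporalLabelling t)
    (hret : ∀ v ∈ N.V, N.inDeg v = 2 → t v ≤ m)
    (hlate : ∃ v ∈ N.V, N.outDeg v ≠ 0 ∧ m < t v) :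
    ∃ a b, N.IsCherry a b := by
  classical
  obtain ⟨v, hvS, hlow⟩ := h.acyclic.exists_mem_forall_arc_not_mem
    (S := N.V.filter fun v => N.outDeg v ≠ 0 ∧ m < t v) (Finset.filter_nonempty_iff.mpr hlate)
  obtain ⟨hvV, hvo, hvt⟩ := Finset.mem_filter.mp hvS
  have hchild : ∀ z, (v, z) ∈ N.A → N.IsLeaf z := fun z hz => by
    have hzV := (N.mem_V _ hz).2
    refine ⟨hzV, by_contra fun hzo => hlow z hz ?_⟩
    exact Finset.mem_filter.mpr ⟨hzV, hzo, hvt.trans (ht.lt_of_arc hret hz hvt)⟩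
  have hvd : N.outDeg v = 2 := h.outDeg_eq_two hvV hvo fun hi => (hret v hvV hi).not_gt hvt
  obtain ⟨x, y, hxy, hx, hy⟩ := exists_ne_arcs_of_outDeg_eq_two hvd
  exact ⟨x, y, hxy, hchild x hx, hchild y hy, v, hx, hy⟩

lemma exists_isRetCherry_of_le (h : N.IsPhylo X) (hts : N.TreeSibling)
    (ht : N.IsTemporalLabelling t) (hret : ∃ r ∈ N.V, N.inDeg r = 2 ∧ t r = m)
    (hearly : ∀ v ∈ N.V, N.outDeg v ≠ 0 → t v ≤ m) :
    ∃ a b, N.IsRetCherry a b := by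
  classical
  have leaf_of_lt : ∀ v ∈ N.V, m < t v → N.IsLeaf v := fun v hv hvt =>
    ⟨hv, by_contra fun ho => (hearly v hv ho).not_gt hvt⟩
  obtain ⟨r, hrS, hlow⟩ := h.acyclic.exists_mem_forall_arc_not_mem
    (S := N.V.filter fun v => N.inDeg v = 2 ∧ t v = m) (Finset.filter_nonempty_iff.mpr hret)
  obtain ⟨hrV, hrd, hrt⟩ := Finset.mem_filter.mp hrS
  obtain ⟨c, hc⟩ : ∃ c, (r, c) ∈ N.A := exists_arc_of_outDeg_ne_zero
    (by rw [h.outDeg_eq_one_of_inDeg_eq_two hrV hrd]; exact one_ne_zero)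
  have hcV := (N.mem_V _ hc).2
  have hcd : N.inDeg c ≠ 2 := fun hi =>
    hlow c hc (Finset.mem_filter.mpr ⟨hcV, hi, (ht r c hc).1 hi ▸ hrt⟩)
  have hcleaf := leaf_of_lt c hcV (hrt ▸ (ht r c hc).2 hcd)
  obtain ⟨p, w, hpr, hpw, -, hw⟩ := hts r hrV hrd
  have hwV := (N.mem_V _ hpw).2
  have hwd : N.inDeg w = 1 := hw.elim (·.2.1) fun hl => h.inDeg_eq_one_of_outDeg_eq_zero hwV hl.2
  have hwleaf : N.IsLeaf w := by
    have := (ht p r hpr).1 hrd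
    have := (ht p w hpw).2 (by omega)
    exact leaf_of_lt w hwV (by omega)
  have hwc : w ≠ c := by
    rintro rfl
    have := two_le_inDeg_of_arcs hpw hc (h.acyclic.ne_of_arc hpr)
    omega
  exact ⟨w, c, hwc, hwleaf, hcleaf, p, r, hpw, hc, hrd, hpr⟩

end Temporal

end Digraph'

/-- every tree-sibling time-consistent phylogenetic network with at
least one reticulation has a cherry or a reticulated cherry. -/
theorem stmt_6 (N : Digraph') (X : Finset ℕ)
    (h : N.IsPhylo X) (hts : N.TreeSibling) (htc : N.TimeConsistent)
    (hret : ∃ v ∈ N.V, N.inDeg v = 2) :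
    (∃ a b, N.IsCherry a b) ∨ (∃ a b, N.IsRetCherry a b) := by
  classical
  obtain ⟨t, ht⟩ := htc
  obtain ⟨r, hrR, hrmax⟩ := (N.V.filter fun v => N.inDeg v = 2).exists_max_image t
    (Finset.filter_nonempty_iff.mpr hret)
  obtain ⟨hrV, hrd⟩ := Finset.mem_filter.mp hrR
  by_cases hlate : ∃ v ∈ N.V, N.outDeg v ≠ 0 ∧ t r < t v
  · exact .inl (exists_isCherry_of_lt h ht
      (fun v hv hi => hrmax v (Finset.mem_filter.mpr ⟨hv, hi⟩)) hlate)
  · push Not at hlate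
    exact .inr (exists_isRetCherry_of_le h hts ht ⟨r, hrV, hrd, rfl⟩ hlate)
end

section
/- If N is a tree-sibling time-consistent phylogenetic network and N' is obtained from N by a cherry reduction (reducing a leaf of a cherry, or cutting a reticulated cherry), then N' is also a tree-sibling time-consistent phylogenetic network. -/
namespace Digraph'

variable {N N' : Digraph'}

lemma arc_reach {x y : ℕ} (h : (x, y) ∈ N.A) : N.Reach x y :=
  Relation.ReflTransGen.single h

lemma no_self_loop (hac : N.Acyclic) {x : ℕ} : (x, x) ∉ N.A :=
  fun h => hac x x h Relation.ReflTransGen.refl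

lemma reach_antisymm (hac : N.Acyclic) {x y : ℕ} (hxy : N.Reach x y)
    (hyx : N.Reach y x) : x = y := by
  rcases Relation.ReflTransGen.cases_head hxy with rfl | ⟨z, hz, hzy⟩
  · rfl
  · exact absurd (hzy.trans hyx) (hac _ _ hz)

lemma reach_lift (h : ∀ e ∈ N'.A, N.Reach e.1 e.2) {x y : ℕ} (hr : N'.Reach x y) :
    N.Reach x y := by
  induction hr with
  | refl => exact Relation.ReflTransGen.refl
  | tail _ h2 ih => exact ih.trans (h _ h2)

lemma acyclic_lift (hac : N.Acyclic)
    (h : ∀ e ∈ N'.A, N.Reach e.1 e.2 ∧ e.1 ≠ e.2) : N'.Acyclic := fun u v ha hr =>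
  (h _ ha).2 (reach_antisymm hac (h _ ha).1 (reach_lift (fun e he => (h e he).1) hr))

lemma outDeg_ne_zero {v x : ℕ} (h : (v, x) ∈ N.A) : N.outDeg v ≠ 0 := by
  intro h0
  have hm : (v, x) ∈ N.A.filter (fun e => e.1 = v) := Finset.mem_filter.2 ⟨h, rfl⟩
  rw [Finset.card_eq_zero.mp h0] at hm
  exact absurd hm (Finset.notMem_empty _)

lemma inDeg_ne_zero {v x : ℕ} (h : (x, v) ∈ N.A) : N.inDeg v ≠ 0 := by
  intro h0
  have hm : (x, v) ∈ N.A.filter (fun e => e.2 = v) := Finset.mem_filter.2 ⟨h, rfl⟩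
  rw [Finset.card_eq_zero.mp h0] at hm
  exact absurd hm (Finset.notMem_empty _)

lemma not_arc_of_outDeg_eq_zero {v : ℕ} (h : N.outDeg v = 0) {x : ℕ} : (v, x) ∉ N.A :=
  fun ha => outDeg_ne_zero ha h

lemma leaf_reach_eq {w y : ℕ} (hw : N.outDeg w = 0) (hr : N.Reach w y) : y = w := by
  rcases Relation.ReflTransGen.cases_head hr with rfl | ⟨z, hz, _⟩
  · rfl
  · exact absurd hz (not_arc_of_outDeg_eq_zero hw)

lemma inDeg_one_uniq {v x y : ℕ} (h : N.inDeg v = 1) (hx : (x, v) ∈ N.A)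
    (hy : (y, v) ∈ N.A) : x = y := by
  have := Finset.card_le_one.mp h.le (x, v) (Finset.mem_filter.2 ⟨hx, rfl⟩)
    (y, v) (Finset.mem_filter.2 ⟨hy, rfl⟩)
  exact congrArg Prod.fst this

lemma outDeg_one_uniq {v x y : ℕ} (h : N.outDeg v = 1) (hx : (v, x) ∈ N.A)
    (hy : (v, y) ∈ N.A) : x = y := by
  have := Finset.card_le_one.mp h.le (v, x) (Finset.mem_filter.2 ⟨hx, rfl⟩)
    (v, y) (Finset.mem_filter.2 ⟨hy, rfl⟩)
  exact congrArg Prod.snd this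

lemma two_le_outDeg {v x y : ℕ} (hx : (v, x) ∈ N.A) (hy : (v, y) ∈ N.A)
    (hxy : x ≠ y) : 2 ≤ N.outDeg v :=
  Finset.one_lt_card.mpr ⟨(v, x), Finset.mem_filter.2 ⟨hx, rfl⟩,
    (v, y), Finset.mem_filter.2 ⟨hy, rfl⟩, by simp [hxy]⟩

lemma two_le_inDeg {v x y : ℕ} (hx : (x, v) ∈ N.A) (hy : (y, v) ∈ N.A)
    (hxy : x ≠ y) : 2 ≤ N.inDeg v :=
  Finset.one_lt_card.mpr ⟨(x, v), Finset.mem_filter.2 ⟨hx, rfl⟩,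
    (y, v), Finset.mem_filter.2 ⟨hy, rfl⟩, by simp [hxy]⟩

lemma outDeg_two_cases {v x y z : ℕ} (h : N.outDeg v = 2) (hx : (v, x) ∈ N.A)
    (hy : (v, y) ∈ N.A) (hxy : x ≠ y) (hz : (v, z) ∈ N.A) : z = x ∨ z = y := by
  by_contra hc
  push_neg at hc
  have h2 : 2 < (N.A.filter (fun e => e.1 = v)).card :=
    Finset.two_lt_card_iff.mpr ⟨(v, x), (v, y), (v, z),
      Finset.mem_filter.2 ⟨hx, rfl⟩, Finset.mem_filter.2 ⟨hy, rfl⟩,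
      Finset.mem_filter.2 ⟨hz, rfl⟩, by simp [hxy], by simp [Ne.symm hc.1],
      by simp [Ne.symm hc.2]⟩
  rw [show (N.A.filter (fun e => e.1 = v)).card = N.outDeg v from rfl, h] at h2
  omega

lemma inDeg_two_cases {v x y z : ℕ} (h : N.inDeg v = 2) (hx : (x, v) ∈ N.A)
    (hy : (y, v) ∈ N.A) (hxy : x ≠ y) (hz : (z, v) ∈ N.A) : z = x ∨ z = y := by
  by_contra hc
  push_neg at hc
  have h2 : 2 < (N.A.filter (fun e => e.2 = v)).card :=
    Finset.two_lt_card_iff.mpr ⟨(x, v), (y, v), (z, v),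
      Finset.mem_filter.2 ⟨hx, rfl⟩, Finset.mem_filter.2 ⟨hy, rfl⟩,
      Finset.mem_filter.2 ⟨hz, rfl⟩, by simp [hxy], by simp [Ne.symm hc.1],
      by simp [Ne.symm hc.2]⟩
  rw [show (N.A.filter (fun e => e.2 = v)).card = N.inDeg v from rfl, h] at h2
  omega

lemma leaf_inDeg {X : Finset ℕ} (h : N.IsPhylo X) {v : ℕ} (hv : v ∈ N.V)
    (h0 : N.outDeg v = 0) : N.inDeg v = 1 := by
  rcases h.degrees v hv with ⟨_, h2⟩ | ⟨h1, _⟩ | ⟨_, h2⟩ | ⟨_, h2⟩ <;> omega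

lemma not_cherry_and_retcherry {X : Finset ℕ} {a b : ℕ} (h : N.IsPhylo X)
    (hc : N.IsCherry a b) (hr : N.IsRetCherry a b) : False := by
  obtain ⟨hab, hla, hlb, p, hpa, hpb⟩ := hc
  obtain ⟨_, _, _, pa, pb, _, hpbb, hpb2, _⟩ := hr
  have hinb : N.inDeg b = 1 := leaf_inDeg h hlb.1 hlb.2
  have hppb : p = pb := inDeg_one_uniq hinb hpb hpbb
  have h2 : 2 ≤ N.outDeg p := two_le_outDeg hpa hpb hab
  have hpV : p ∈ N.V := (N.mem_V _ hpa).1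
  rcases h.degrees p hpV with ⟨h1, _⟩ | ⟨h1, _⟩ | ⟨h1, _⟩ | ⟨_, h1⟩ <;>
    first
    | (rw [hppb] at h1; omega)
    | omega

lemma notMem_erase1 {α : Type*} [DecidableEq α] {F : Finset α} {x : α} (a : α)
    (h : x ∉ F) : x ∉ F.erase a := fun hm => h (Finset.mem_of_mem_erase hm)

lemma notMem_erase2 {α : Type*} [DecidableEq α] {F : Finset α} {x : α} (a b : α)
    (h : x ∉ F) : x ∉ (F.erase a).erase b := notMem_erase1 b (notMem_erase1 a h)

lemma notMem_erase3 {α : Type*} [DecidableEq α] {F : Finset α} {x : α} (a b c : α)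
    (h : x ∉ F) : x ∉ ((F.erase a).erase b).erase c :=
  notMem_erase1 c (notMem_erase2 a b h)

lemma notMem_erase4 {α : Type*} [DecidableEq α] {F : Finset α} {x : α} (a b c d : α)
    (h : x ∉ F) : x ∉ (((F.erase a).erase b).erase c).erase d :=
  notMem_erase1 d (notMem_erase3 a b c h)

lemma reduce_aux {X : Finset ℕ} {a b : ℕ} (h : N.IsPhylo X) (hts : N.TreeSibling)
    (htc : N.TimeConsistent) (hred : ReduceCherry N N' a b) :
    (N'.IsPhylo (X.erase b) ∨ IsSingle N') ∧ N'.TreeSibling ∧ N'.TimeConsistent := by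
  obtain ⟨⟨hab, hla, hlb, -⟩, p, hpa, hpb, hcase⟩ := hred
  rcases hcase with ⟨hp0, hV', hA'⟩ | ⟨u, hup, hV', hA'⟩
  · -- the common parent is the root: N' is the single vertex a
    refine ⟨Or.inr ⟨a, hV', hA'⟩, ?_, ?_⟩
    · intro v hv h2
      exfalso
      simp [inDeg, hA'] at h2
    · exact ⟨id, fun x y hxy => by rw [hA'] at hxy; exact absurd hxy (Finset.notMem_empty _)⟩
  · -- main case
    have hac := h.acyclic
    have haV : a ∈ N.V := hla.1
    have hbV : b ∈ N.V := hlb.1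
    have houta : N.outDeg a = 0 := hla.2
    have houtb : N.outDeg b = 0 := hlb.2
    have hina : N.inDeg a = 1 := leaf_inDeg h haV houta
    have hinb : N.inDeg b = 1 := leaf_inDeg h hbV houtb
    have hpV : p ∈ N.V := (N.mem_V _ hpa).1
    have huV : u ∈ N.V := (N.mem_V _ hup).1
    have hpne_a : p ≠ a := by rintro rfl; exact not_arc_of_outDeg_eq_zero houta hpb
    have hpne_b : p ≠ b := by rintro rfl; exact not_arc_of_outDeg_eq_zero houtb hpa
    have hune_p : u ≠ p := by rintro rfl; exact no_self_loop hac hup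
    have hune_a : u ≠ a := by rintro rfl; exact not_arc_of_outDeg_eq_zero houta hup
    have hune_b : u ≠ b := by rintro rfl; exact not_arc_of_outDeg_eq_zero houtb hup
    have h2le : 2 ≤ N.outDeg p := two_le_outDeg hpa hpb hab
    have h1le : N.inDeg p ≠ 0 := inDeg_ne_zero hup
    have houtp : N.outDeg p = 2 := by
      rcases h.degrees p hpV with ⟨h1, h2⟩ | ⟨h1, h2⟩ | ⟨h1, h2⟩ | ⟨h1, h2⟩ <;> omega
    have hinp : N.inDeg p = 1 := by
      rcases h.degrees p hpV with ⟨h1, h2⟩ | ⟨h1, h2⟩ | ⟨h1, h2⟩ | ⟨h1, h2⟩ <;> omega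
    have hchild : ∀ z, (p, z) ∈ N.A → z = a ∨ z = b :=
      fun z hz => outDeg_two_cases houtp hpa hpb hab hz
    have hpar : ∀ z, (z, p) ∈ N.A → z = u := fun z hz => inDeg_one_uniq hinp hz hup
    have hua_not : (u, a) ∉ N.A := fun hx => hune_p (inDeg_one_uniq hina hx hpa)
    have hA'mem : ∀ e : ℕ × ℕ, e ∈ N'.A ↔
        e = (u, a) ∨ (e ∈ N.A ∧ e ≠ (u, p) ∧ e ≠ (p, a) ∧ e ≠ (p, b)) := by
      intro e; rw [hA']
      simp only [Finset.mem_insert, Finset.mem_erase]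
      tauto
    have hV'mem : ∀ v, v ∈ N'.V ↔ v ∈ N.V ∧ v ≠ p ∧ v ≠ b := by
      intro v; rw [hV']
      simp only [Finset.mem_erase]
      tauto
    -- out-degrees are unchanged off p
    have houtEq : ∀ v, v ≠ p → N'.outDeg v = N.outDeg v := by
      intro v hvp
      by_cases hvu : v = u
      · subst hvu
        have hmemup : (v, p) ∈ N.A.filter (fun e => e.1 = v) :=
          Finset.mem_filter.2 ⟨hup, rfl⟩
        have hpos : 0 < (N.A.filter (fun e => e.1 = v)).card :=
          Finset.card_pos.mpr ⟨_, hmemup⟩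
        have hnot : (v, a) ∉ (N.A.filter (fun e => e.1 = v)).erase (v, p) := by
          intro hm
          exact hua_not (Finset.mem_filter.mp (Finset.mem_of_mem_erase hm)).1
        simp only [outDeg, hA', Finset.filter_insert, Finset.filter_erase]
        rw [if_pos trivial]
        rw [Finset.erase_eq_of_notMem
            (fun hm => hvp ((Finset.mem_filter.mp
              (Finset.mem_of_mem_erase (Finset.mem_of_mem_erase hm))).2).symm)]
        rw [Finset.erase_eq_of_notMem
            (fun hm => hvp ((Finset.mem_filter.mp (Finset.mem_of_mem_erase hm)).2).symm)]
        rw [Finset.card_insert_of_notMem hnot, Finset.card_erase_of_mem hmemup]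
        omega
      · simp only [outDeg, hA', Finset.filter_insert, Finset.filter_erase]
        rw [if_neg (fun hq => hvu hq.symm)]
        rw [Finset.erase_eq_of_notMem
            (fun hm => hvp ((Finset.mem_filter.mp
              (Finset.mem_of_mem_erase (Finset.mem_of_mem_erase hm))).2).symm)]
        rw [Finset.erase_eq_of_notMem
            (fun hm => hvp ((Finset.mem_filter.mp (Finset.mem_of_mem_erase hm)).2).symm)]
        rw [Finset.erase_eq_of_notMem
            (fun hm => hvu ((Finset.mem_filter.mp hm).2).symm)]
    -- in-degrees are unchanged off p and b
    have hinEq : ∀ v, v ≠ p → v ≠ b → N'.inDeg v = N.inDeg v := by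
      intro v hvp hvb
      by_cases hva : v = a
      · subst hva
        have hmempa : (p, v) ∈ N.A.filter (fun e => e.2 = v) :=
          Finset.mem_filter.2 ⟨hpa, rfl⟩
        have hnot : (u, v) ∉ ((N.A.filter (fun e => e.2 = v)).erase (u, p)).erase (p, v) := by
          intro hm
          exact hua_not (Finset.mem_filter.mp
            (Finset.mem_of_mem_erase (Finset.mem_of_mem_erase hm))).1
        have hina' : (N.A.filter (fun e => e.2 = v)).card = 1 := hina
        simp only [inDeg, hA', Finset.filter_insert, Finset.filter_erase]
        rw [if_pos trivial]
        rw [Finset.erase_eq_of_notMem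
            (fun hm => hvb ((Finset.mem_filter.mp
              (Finset.mem_of_mem_erase (Finset.mem_of_mem_erase hm))).2).symm)]
        rw [Finset.card_insert_of_notMem hnot]
        rw [Finset.erase_right_comm]
        rw [Finset.erase_eq_of_notMem
            (fun hm => hvp ((Finset.mem_filter.mp (Finset.mem_of_mem_erase hm)).2).symm)]
        rw [Finset.card_erase_of_mem hmempa, hina']
      · simp only [inDeg, hA', Finset.filter_insert, Finset.filter_erase]
        rw [if_neg (fun hq => hva hq.symm)]
        rw [Finset.erase_eq_of_notMem
            (fun hm => hvb ((Finset.mem_filter.mp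
              (Finset.mem_of_mem_erase (Finset.mem_of_mem_erase hm))).2).symm)]
        rw [Finset.erase_eq_of_notMem
            (fun hm => hva ((Finset.mem_filter.mp (Finset.mem_of_mem_erase hm)).2).symm)]
        rw [Finset.erase_eq_of_notMem
            (fun hm => hvp ((Finset.mem_filter.mp hm).2).symm)]
    -- reachability transfer N → N'
    have hreachp : ∀ y, N.Reach p y → y = p ∨ y = a ∨ y = b := by
      intro y hr
      rcases Relation.ReflTransGen.cases_head hr with rfl | ⟨z, hz, hzy⟩
      · exact Or.inl rfl
      · rcases hchild z hz with rfl | rfl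
        · exact Or.inr (Or.inl (leaf_reach_eq houta hzy))
        · exact Or.inr (Or.inr (leaf_reach_eq houtb hzy))
    have htrans : ∀ y, y ≠ p → y ≠ a → y ≠ b → ∀ x, N.Reach x y → x ≠ p → N'.Reach x y := by
      intro y hyp hya hyb x hr
      induction hr using Relation.ReflTransGen.head_induction_on with
      | refl => exact fun _ => Relation.ReflTransGen.refl
      | @head x' z hxz hzy ih =>
        intro hxp
        by_cases hzp : z = p
        · subst hzp
          rcases hreachp y hzy with rfl | rfl | rfl
          · exact absurd rfl hyp
          · exact absurd rfl hya
          · exact absurd rfl hyb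
        · refine Relation.ReflTransGen.head ?_ (ih hzp)
          rw [hA'mem]
          refine Or.inr ⟨hxz, ?_, ?_, ?_⟩
          · exact fun hq => hzp (congrArg Prod.snd hq)
          · exact fun hq => hxp (congrArg Prod.fst hq)
          · exact fun hq => hxp (congrArg Prod.fst hq)
    -- acyclicity
    have hac' : N'.Acyclic := by
      apply acyclic_lift hac
      rintro ⟨x, y⟩ he
      rw [hA'mem] at he
      rcases he with he | ⟨he, -, -, -⟩
      · simp only [Prod.mk.injEq] at he
        obtain ⟨rfl, rfl⟩ := he
        exact ⟨(arc_reach hup).tail hpa, hune_a⟩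
      · refine ⟨arc_reach he, fun hq => ?_⟩
        simp only at hq
        subst hq
        exact no_self_loop hac he
    -- the root
    obtain ⟨ρ, hρV, hρin, hρout, hρreach⟩ := h.root
    have hρp : ρ ≠ p := by rintro rfl; omega
    have hρb : ρ ≠ b := by
      rintro rfl
      rw [hρout] at houtb
      omega
    have hρV' : ρ ∈ N'.V := (hV'mem ρ).2 ⟨hρV, hρp, hρb⟩
    have hreach' : ∀ v ∈ N'.V, N'.Reach ρ v := by
      intro v hv
      obtain ⟨hvV, hvp, hvb⟩ := (hV'mem v).1 hv
      by_cases hva : v = a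
      · subst hva
        have hstep : (u, v) ∈ N'.A := (hA'mem _).2 (Or.inl rfl)
        by_cases hρu : ρ = u
        · rw [hρu]; exact arc_reach hstep
        · exact Relation.ReflTransGen.tail
            (htrans u hune_p hune_a hune_b ρ (hρreach u huV) hρp) hstep
      · exact htrans v hvp hva hvb ρ (hρreach v hvV) hρp
    -- assemble IsPhylo
    have hphylo : N'.IsPhylo (X.erase b) := by
      refine ⟨hac', ?_, ?_, ⟨ρ, hρV', ?_, ?_, hreach'⟩, ?_⟩
      · intro x hx
        rw [Finset.mem_erase] at hx
        refine (hV'mem x).2 ⟨h.X_sub hx.2, ?_, hx.1⟩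
        intro hq
        have h0 : N.outDeg p = 0 := (h.leafSet p hpV).2 (hq ▸ hx.2)
        omega
      · intro v hv
        obtain ⟨hvV, hvp, hvb⟩ := (hV'mem v).1 hv
        rw [houtEq v hvp, h.leafSet v hvV, Finset.mem_erase]
        simp [hvb]
      · rw [hinEq ρ hρp hρb]; exact hρin
      · rw [houtEq ρ hρp]; exact hρout
      · intro v hv
        obtain ⟨hvV, hvp, hvb⟩ := (hV'mem v).1 hv
        rw [hinEq v hvp hvb, houtEq v hvp]
        exact h.degrees v hvV
    refine ⟨Or.inl hphylo, ?_, ?_⟩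
    · -- tree-sibling
      intro v hv h2
      obtain ⟨hvV, hvp, hvb⟩ := (hV'mem v).1 hv
      rw [hinEq v hvp hvb] at h2
      have hva : v ≠ a := by rintro rfl; omega
      obtain ⟨p₀, w, hp₀v, hp₀w, hwv, hw⟩ := hts v hvV h2
      have harc1 : (p₀, v) ∈ N'.A := by
        rw [hA'mem]
        refine Or.inr ⟨hp₀v, ?_, ?_, ?_⟩
        · exact fun hq => hvp (congrArg Prod.snd hq)
        · exact fun hq => hva (congrArg Prod.snd hq)
        · exact fun hq => hvb (congrArg Prod.snd hq)
      have haV' : a ∈ N'.V := (hV'mem a).2 ⟨haV, Ne.symm hpne_a, hab⟩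
      have haleaf' : N'.IsLeaf a := ⟨haV', by rw [houtEq a (Ne.symm hpne_a)]; exact houta⟩
      by_cases hwp : w = p
      · subst hwp
        have hp₀u : p₀ = u := hpar p₀ hp₀w
        refine ⟨p₀, a, harc1, ?_, Ne.symm hva, Or.inr haleaf'⟩
        rw [hA'mem, hp₀u]
        exact Or.inl rfl
      · have hwb : w ≠ b := by
          rintro rfl
          have hq : p₀ = p := inDeg_one_uniq hinb hp₀w hpb
          subst hq
          rcases hchild v hp₀v with rfl | rfl
          · exact hva rfl
          · exact hvb rfl
        have hnot_pa : p₀ ≠ p := by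
          rintro rfl
          rcases hchild v hp₀v with rfl | rfl
          · exact hva rfl
          · exact hvb rfl
        have harc2 : (p₀, w) ∈ N'.A := by
          rw [hA'mem]
          refine Or.inr ⟨hp₀w, ?_, ?_, ?_⟩
          · exact fun hq => hwp (congrArg Prod.snd hq)
          · exact fun hq => hnot_pa (congrArg Prod.fst hq)
          · exact fun hq => hnot_pa (congrArg Prod.fst hq)
        refine ⟨p₀, w, harc1, harc2, hwv, ?_⟩
        rcases hw with ⟨hwV, hw1, hw2⟩ | ⟨hwV, hw0⟩
        · exact Or.inl ⟨(hV'mem w).2 ⟨hwV, hwp, hwb⟩,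
            by rw [hinEq w hwp hwb]; exact hw1, by rw [houtEq w hwp]; exact hw2⟩
        · exact Or.inr ⟨(hV'mem w).2 ⟨hwV, hwp, hwb⟩, by rw [houtEq w hwp]; exact hw0⟩
    · -- time-consistency
      obtain ⟨t, ht⟩ := htc
      refine ⟨t, ?_⟩
      intro x y hxy
      have hyV' : y ∈ N'.V := (N'.mem_V _ hxy).2
      obtain ⟨hyV, hyp, hyb⟩ := (hV'mem y).1 hyV'
      rw [hA'mem] at hxy
      rcases hxy with hq | ⟨he, -, -, -⟩
      · simp only [Prod.mk.injEq] at hq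
        obtain ⟨rfl, rfl⟩ := hq
        rw [hinEq y hyp hyb, hina]
        have h1 := (ht x p hup).2 (by omega)
        have h2 := (ht p y hpa).2 (by omega)
        exact ⟨by omega, fun _ => by omega⟩
      · rw [hinEq y hyp hyb]
        exact ht x y he

lemma cut_aux {X : Finset ℕ} {a b : ℕ} (h : N.IsPhylo X) (hts : N.TreeSibling)
    (htc : N.TimeConsistent) (hcut : CutRetCherry N N' a b) :
    N'.IsPhylo X ∧ N'.TreeSibling ∧ N'.TimeConsistent := by
  obtain ⟨⟨hab, hla, hlb, -⟩, pa, pb, ua, q, hpaa, hpbb, hpb2, hpapb, huapa, hqpb,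
    hqpa, hV', hA'⟩ := hcut
  have hac := h.acyclic
  have haV : a ∈ N.V := hla.1
  have hbV : b ∈ N.V := hlb.1
  have houta : N.outDeg a = 0 := hla.2
  have houtb : N.outDeg b = 0 := hlb.2
  have hina : N.inDeg a = 1 := leaf_inDeg h haV houta
  have hinb : N.inDeg b = 1 := leaf_inDeg h hbV houtb
  have hpaV : pa ∈ N.V := (N.mem_V _ hpaa).1
  have hpbV : pb ∈ N.V := (N.mem_V _ hpbb).1
  have huaV : ua ∈ N.V := (N.mem_V _ huapa).1
  have hqV : q ∈ N.V := (N.mem_V _ hqpb).1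
  have houtpb : N.outDeg pb = 1 := by
    have h0 : N.outDeg pb ≠ 0 := outDeg_ne_zero hpbb
    rcases h.degrees pb hpbV with ⟨h1, h2⟩ | ⟨h1, h2⟩ | ⟨h1, h2⟩ | ⟨h1, h2⟩ <;> omega
  have hapb : a ≠ pb := by rintro rfl; exact not_arc_of_outDeg_eq_zero houta hpbb
  have houtpa : N.outDeg pa = 2 := by
    have h2le : 2 ≤ N.outDeg pa := two_le_outDeg hpaa hpapb hapb
    have h1le : N.inDeg pa ≠ 0 := inDeg_ne_zero huapa
    rcases h.degrees pa hpaV with ⟨h1, h2⟩ | ⟨h1, h2⟩ | ⟨h1, h2⟩ | ⟨h1, h2⟩ <;> omega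
  have hinpa : N.inDeg pa = 1 := by
    have h2le : 2 ≤ N.outDeg pa := two_le_outDeg hpaa hpapb hapb
    have h1le : N.inDeg pa ≠ 0 := inDeg_ne_zero huapa
    rcases h.degrees pa hpaV with ⟨h1, h2⟩ | ⟨h1, h2⟩ | ⟨h1, h2⟩ | ⟨h1, h2⟩ <;> omega
  have hchildpa : ∀ z, (pa, z) ∈ N.A → z = a ∨ z = pb :=
    fun z hz => outDeg_two_cases houtpa hpaa hpapb hapb hz
  have hparpa : ∀ z, (z, pa) ∈ N.A → z = ua := fun z hz => inDeg_one_uniq hinpa hz huapa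
  have hparpb : ∀ z, (z, pb) ∈ N.A → z = pa ∨ z = q :=
    fun z hz => inDeg_two_cases hpb2 hpapb hqpb (Ne.symm hqpa) hz
  have hchildpb : ∀ z, (pb, z) ∈ N.A → z = b := fun z hz => outDeg_one_uniq houtpb hz hpbb
  have hpane_a : pa ≠ a := by rintro rfl; exact not_arc_of_outDeg_eq_zero houta hpaa
  have hpane_b : pa ≠ b := by rintro rfl; exact not_arc_of_outDeg_eq_zero houtb hpaa
  have hpbne_b : pb ≠ b := by rintro rfl; exact no_self_loop hac hpbb
  have hpbne_a : pb ≠ a := Ne.symm hapb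
  have hpane_pb : pa ≠ pb := by rintro rfl; exact no_self_loop hac hpapb
  have huane_pa : ua ≠ pa := by rintro rfl; exact no_self_loop hac huapa
  have huane_a : ua ≠ a := by rintro rfl; exact not_arc_of_outDeg_eq_zero houta huapa
  have huane_b : ua ≠ b := by rintro rfl; exact not_arc_of_outDeg_eq_zero houtb huapa
  have huane_pb : ua ≠ pb := by
    intro hq0
    rw [hq0] at huapa
    exact hac pb pa huapa (arc_reach hpapb)
  have hqne_pb : q ≠ pb := by rintro rfl; exact no_self_loop hac hqpb
  have hqne_a : q ≠ a := by rintro rfl; exact not_arc_of_outDeg_eq_zero houta hqpb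
  have hqne_b : q ≠ b := by rintro rfl; exact not_arc_of_outDeg_eq_zero houtb hqpb
  have huaa_not : (ua, a) ∉ N.A := fun hx => huane_pa (inDeg_one_uniq hina hx hpaa)
  have hqb_not : (q, b) ∉ N.A := fun hx => hqne_pb (inDeg_one_uniq hinb hx hpbb)
  have huab_not : (ua, b) ∉ N.A := fun hx => huane_pb (inDeg_one_uniq hinb hx hpbb)
  have hA'mem : ∀ e : ℕ × ℕ, e ∈ N'.A ↔ e = (ua, a) ∨ e = (q, b) ∨
      (e ∈ N.A ∧ e ≠ (pa, pb) ∧ e ≠ (ua, pa) ∧ e ≠ (pa, a) ∧ e ≠ (q, pb) ∧ e ≠ (pb, b)) := by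
    intro e; rw [hA']
    simp only [Finset.mem_insert, Finset.mem_erase]
    tauto
  have hV'mem : ∀ v, v ∈ N'.V ↔ v ∈ N.V ∧ v ≠ pa ∧ v ≠ pb := by
    intro v; rw [hV']
    simp only [Finset.mem_erase]
    tauto
  -- out-degrees unchanged off pa, pb
  have houtEq : ∀ v, v ≠ pa → v ≠ pb → N'.outDeg v = N.outDeg v := by
    intro v hvpa hvpb
    by_cases hvua : v = ua
    · rw [hvua]
      by_cases hqua : q = ua
      · rw [hqua] at hA' hqpb hqb_not
        simp only [outDeg, hA', Finset.filter_insert, Finset.filter_erase]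
        set F := N.A.filter (fun e => e.1 = ua) with hF
        have hnpb : (pb, b) ∉ F := fun hm => huane_pb ((Finset.mem_filter.mp hm).2).symm
        have hnpaa : (pa, a) ∉ F := fun hm => huane_pa ((Finset.mem_filter.mp hm).2).symm
        have hnpapb : (pa, pb) ∉ F := fun hm => huane_pa ((Finset.mem_filter.mp hm).2).symm
        have hm1 : (ua, pa) ∈ F := Finset.mem_filter.2 ⟨huapa, rfl⟩
        have hm2 : (ua, pb) ∈ F.erase (ua, pa) :=
          Finset.mem_erase.2 ⟨fun hq1 => hpane_pb (congrArg Prod.snd hq1).symm,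
            Finset.mem_filter.2 ⟨hqpb, rfl⟩⟩
        have h2le : 2 ≤ F.card := by
          have h2 := two_le_outDeg huapa hqpb hpane_pb
          simpa [outDeg, hF] using h2
        have hni2 : (ua, b) ∉ (F.erase (ua, pa)).erase (ua, pb) := fun hm =>
          huab_not (Finset.mem_filter.mp (Finset.mem_of_mem_erase
            (Finset.mem_of_mem_erase hm))).1
        have hni1 : (ua, a) ∉ insert (ua, b) ((F.erase (ua, pa)).erase (ua, pb)) := by
          intro hm
          rcases Finset.mem_insert.mp hm with hq1 | hq1
          · exact hab (congrArg Prod.snd hq1)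
          · exact huaa_not (Finset.mem_filter.mp (Finset.mem_of_mem_erase
              (Finset.mem_of_mem_erase hq1))).1
        rw [if_pos trivial, if_pos trivial]
        rw [Finset.erase_eq_of_notMem (notMem_erase4 _ _ _ _ hnpb)]
        rw [Finset.erase_eq_of_notMem (notMem_erase2 _ _ hnpaa)]
        rw [Finset.erase_eq_of_notMem hnpapb]
        rw [Finset.card_insert_of_notMem hni1, Finset.card_insert_of_notMem hni2,
          Finset.card_erase_of_mem hm2, Finset.card_erase_of_mem hm1]
        omega
      · simp only [outDeg, hA', Finset.filter_insert, Finset.filter_erase]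
        set F := N.A.filter (fun e => e.1 = ua) with hF
        have hnpb : (pb, b) ∉ F := fun hm => huane_pb ((Finset.mem_filter.mp hm).2).symm
        have hnq : (q, pb) ∉ F := fun hm => hqua (Finset.mem_filter.mp hm).2
        have hnpaa : (pa, a) ∉ F := fun hm => huane_pa ((Finset.mem_filter.mp hm).2).symm
        have hnpapb : (pa, pb) ∉ F := fun hm => huane_pa ((Finset.mem_filter.mp hm).2).symm
        have hm1 : (ua, pa) ∈ F := Finset.mem_filter.2 ⟨huapa, rfl⟩
        have h1le : 1 ≤ F.card := Finset.card_pos.mpr ⟨_, hm1⟩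
        have hni : (ua, a) ∉ F.erase (ua, pa) := fun hm =>
          huaa_not (Finset.mem_filter.mp (Finset.mem_of_mem_erase hm)).1
        rw [if_pos trivial, if_neg hqua]
        rw [Finset.erase_eq_of_notMem (notMem_erase4 _ _ _ _ hnpb)]
        rw [Finset.erase_eq_of_notMem (notMem_erase3 _ _ _ hnq)]
        rw [Finset.erase_eq_of_notMem (notMem_erase2 _ _ hnpaa)]
        rw [Finset.erase_eq_of_notMem hnpapb]
        rw [Finset.card_insert_of_notMem hni, Finset.card_erase_of_mem hm1]
        omega
    · by_cases hvq : v = q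
      · rw [hvq]
        have hqua : ¬ua = q := fun hq1 => hvua (hvq.trans hq1.symm)
        simp only [outDeg, hA', Finset.filter_insert, Finset.filter_erase]
        set F := N.A.filter (fun e => e.1 = q) with hF
        have hnpb : (pb, b) ∉ F := fun hm => hqne_pb ((Finset.mem_filter.mp hm).2).symm
        have hnpaa : (pa, a) ∉ F := fun hm => hqpa ((Finset.mem_filter.mp hm).2).symm
        have hnua : (ua, pa) ∉ F := fun hm => hqua (Finset.mem_filter.mp hm).2
        have hnpapb : (pa, pb) ∉ F := fun hm => hqpa ((Finset.mem_filter.mp hm).2).symm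
        have hm1 : (q, pb) ∈ F := Finset.mem_filter.2 ⟨hqpb, rfl⟩
        have h1le : 1 ≤ F.card := Finset.card_pos.mpr ⟨_, hm1⟩
        have hni : (q, b) ∉ F.erase (q, pb) := fun hm =>
          hqb_not (Finset.mem_filter.mp (Finset.mem_of_mem_erase hm)).1
        rw [if_neg hqua, if_pos trivial]
        rw [Finset.erase_eq_of_notMem (notMem_erase4 _ _ _ _ hnpb)]
        rw [Finset.erase_eq_of_notMem (notMem_erase2 _ _ hnpaa)]
        rw [Finset.erase_eq_of_notMem (notMem_erase1 _ hnua)]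
        rw [Finset.erase_eq_of_notMem hnpapb]
        rw [Finset.card_insert_of_notMem hni, Finset.card_erase_of_mem hm1]
        omega
      · simp only [outDeg, hA', Finset.filter_insert, Finset.filter_erase]
        set F := N.A.filter (fun e => e.1 = v) with hF
        have hnpb : (pb, b) ∉ F := fun hm => hvpb ((Finset.mem_filter.mp hm).2).symm
        have hnq : (q, pb) ∉ F := fun hm => hvq ((Finset.mem_filter.mp hm).2).symm
        have hnpaa : (pa, a) ∉ F := fun hm => hvpa ((Finset.mem_filter.mp hm).2).symm
        have hnua : (ua, pa) ∉ F := fun hm => hvua ((Finset.mem_filter.mp hm).2).symm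
        have hnpapb : (pa, pb) ∉ F := fun hm => hvpa ((Finset.mem_filter.mp hm).2).symm
        rw [if_neg (fun hq1 => hvua hq1.symm), if_neg (fun hq1 => hvq hq1.symm)]
        rw [Finset.erase_eq_of_notMem (notMem_erase4 _ _ _ _ hnpb)]
        rw [Finset.erase_eq_of_notMem (notMem_erase3 _ _ _ hnq)]
        rw [Finset.erase_eq_of_notMem (notMem_erase2 _ _ hnpaa)]
        rw [Finset.erase_eq_of_notMem (notMem_erase1 _ hnua)]
        rw [Finset.erase_eq_of_notMem hnpapb]
  -- in-degrees unchanged off pa, pb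
  have hinEq : ∀ v, v ≠ pa → v ≠ pb → N'.inDeg v = N.inDeg v := by
    intro v hvpa hvpb
    by_cases hva : v = a
    · rw [hva]
      simp only [inDeg, hA', Finset.filter_insert, Finset.filter_erase]
      set F := N.A.filter (fun e => e.2 = a) with hF
      have hnpbb : (pb, b) ∉ F := fun hm => hab ((Finset.mem_filter.mp hm).2).symm
      have hnqpb : (q, pb) ∉ F := fun hm => hpbne_a (Finset.mem_filter.mp hm).2
      have hnua : (ua, pa) ∉ F := fun hm => hpane_a (Finset.mem_filter.mp hm).2
      have hnpapb : (pa, pb) ∉ F := fun hm => hpbne_a (Finset.mem_filter.mp hm).2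
      have hm1 : (pa, a) ∈ F := Finset.mem_filter.2 ⟨hpaa, rfl⟩
      have hina' : F.card = 1 := hina
      have hni : (ua, a) ∉ F.erase (pa, a) := fun hm =>
        huaa_not (Finset.mem_filter.mp (Finset.mem_of_mem_erase hm)).1
      rw [if_pos trivial, if_neg (fun hq1 => hab hq1.symm)]
      rw [Finset.erase_eq_of_notMem (notMem_erase4 _ _ _ _ hnpbb)]
      rw [Finset.erase_eq_of_notMem (notMem_erase3 _ _ _ hnqpb)]
      rw [Finset.erase_eq_of_notMem (notMem_erase1 _ hnua)]
      rw [Finset.erase_eq_of_notMem hnpapb]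
      rw [Finset.card_insert_of_notMem hni, Finset.card_erase_of_mem hm1]
      omega
    · by_cases hvb : v = b
      · rw [hvb]
        simp only [inDeg, hA', Finset.filter_insert, Finset.filter_erase]
        set F := N.A.filter (fun e => e.2 = b) with hF
        have hnqpb : (q, pb) ∉ F := fun hm => hpbne_b (Finset.mem_filter.mp hm).2
        have hnpaa : (pa, a) ∉ F := fun hm => hab (Finset.mem_filter.mp hm).2
        have hnua : (ua, pa) ∉ F := fun hm => hpane_b (Finset.mem_filter.mp hm).2
        have hnpapb : (pa, pb) ∉ F := fun hm => hpbne_b (Finset.mem_filter.mp hm).2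
        have hm1 : (pb, b) ∈ F := Finset.mem_filter.2 ⟨hpbb, rfl⟩
        have hinb' : F.card = 1 := hinb
        have hni : (q, b) ∉ F.erase (pb, b) := fun hm =>
          hqb_not (Finset.mem_filter.mp (Finset.mem_of_mem_erase hm)).1
        rw [if_neg (fun hq1 => hab hq1), if_pos trivial]
        rw [Finset.erase_eq_of_notMem (notMem_erase3 _ _ _ hnqpb)]
        rw [Finset.erase_eq_of_notMem (notMem_erase2 _ _ hnpaa)]
        rw [Finset.erase_eq_of_notMem (notMem_erase1 _ hnua)]
        rw [Finset.erase_eq_of_notMem hnpapb]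
        rw [Finset.card_insert_of_notMem hni, Finset.card_erase_of_mem hm1]
        omega
      · simp only [inDeg, hA', Finset.filter_insert, Finset.filter_erase]
        set F := N.A.filter (fun e => e.2 = v) with hF
        have hnpbb : (pb, b) ∉ F := fun hm => hvb ((Finset.mem_filter.mp hm).2).symm
        have hnqpb : (q, pb) ∉ F := fun hm => hvpb ((Finset.mem_filter.mp hm).2).symm
        have hnpaa : (pa, a) ∉ F := fun hm => hva ((Finset.mem_filter.mp hm).2).symm
        have hnua : (ua, pa) ∉ F := fun hm => hvpa ((Finset.mem_filter.mp hm).2).symm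
        have hnpapb : (pa, pb) ∉ F := fun hm => hvpb ((Finset.mem_filter.mp hm).2).symm
        rw [if_neg (fun hq1 => hva hq1.symm), if_neg (fun hq1 => hvb hq1.symm)]
        rw [Finset.erase_eq_of_notMem (notMem_erase4 _ _ _ _ hnpbb)]
        rw [Finset.erase_eq_of_notMem (notMem_erase3 _ _ _ hnqpb)]
        rw [Finset.erase_eq_of_notMem (notMem_erase2 _ _ hnpaa)]
        rw [Finset.erase_eq_of_notMem (notMem_erase1 _ hnua)]
        rw [Finset.erase_eq_of_notMem hnpapb]
  -- reachability
  have hreachpb : ∀ y, N.Reach pb y → y = pb ∨ y = b := by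
    intro y hr
    rcases Relation.ReflTransGen.cases_head hr with rfl | ⟨z, hz, hzy⟩
    · exact Or.inl rfl
    · have hzb : z = b := hchildpb z hz
      subst hzb
      exact Or.inr (leaf_reach_eq houtb hzy)
  have hreachpa : ∀ y, N.Reach pa y → y = pa ∨ y = a ∨ y = pb ∨ y = b := by
    intro y hr
    rcases Relation.ReflTransGen.cases_head hr with rfl | ⟨z, hz, hzy⟩
    · exact Or.inl rfl
    · rcases hchildpa z hz with rfl | rfl
      · exact Or.inr (Or.inl (leaf_reach_eq houta hzy))
      · rcases hreachpb y hzy with rfl | rfl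
        · exact Or.inr (Or.inr (Or.inl rfl))
        · exact Or.inr (Or.inr (Or.inr rfl))
  have htrans : ∀ y, y ≠ pa → y ≠ pb → y ≠ a → y ≠ b →
      ∀ x, N.Reach x y → x ≠ pa → x ≠ pb → N'.Reach x y := by
    intro y hypa hypb hya hyb x hr
    induction hr using Relation.ReflTransGen.head_induction_on with
    | refl => exact fun _ _ => Relation.ReflTransGen.refl
    | @head x' z hxz hzy ih =>
      intro hxpa hxpb
      by_cases hzpa : z = pa
      · subst hzpa
        rcases hreachpa y hzy with rfl | rfl | rfl | rfl
        · exact absurd rfl hypa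
        · exact absurd rfl hya
        · exact absurd rfl hypb
        · exact absurd rfl hyb
      · by_cases hzpb : z = pb
        · subst hzpb
          rcases hreachpb y hzy with rfl | rfl
          · exact absurd rfl hypb
          · exact absurd rfl hyb
        · refine Relation.ReflTransGen.head ?_ (ih hzpa hzpb)
          rw [hA'mem]
          refine Or.inr (Or.inr ⟨hxz, ?_, ?_, ?_, ?_, ?_⟩)
          · exact fun hq1 => hzpb (congrArg Prod.snd hq1)
          · exact fun hq1 => hzpa (congrArg Prod.snd hq1)
          · exact fun hq1 => hxpa (congrArg Prod.fst hq1)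
          · exact fun hq1 => hzpb (congrArg Prod.snd hq1)
          · exact fun hq1 => hxpb (congrArg Prod.fst hq1)
  have hac' : N'.Acyclic := by
    apply acyclic_lift hac
    rintro ⟨x, y⟩ he
    rw [hA'mem] at he
    rcases he with he | he | ⟨he, -, -, -, -, -⟩
    · simp only [Prod.mk.injEq] at he
      obtain ⟨rfl, rfl⟩ := he
      exact ⟨(arc_reach huapa).tail hpaa, huane_a⟩
    · simp only [Prod.mk.injEq] at he
      obtain ⟨rfl, rfl⟩ := he
      exact ⟨(arc_reach hqpb).tail hpbb, hqne_b⟩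
    · refine ⟨arc_reach he, fun hq1 => ?_⟩
      simp only at hq1
      subst hq1
      exact no_self_loop hac he
  obtain ⟨ρ, hρV, hρin, hρout, hρreach⟩ := h.root
  have hρpa : ρ ≠ pa := by rintro rfl; omega
  have hρpb : ρ ≠ pb := by rintro rfl; omega
  have hρV' : ρ ∈ N'.V := (hV'mem ρ).2 ⟨hρV, hρpa, hρpb⟩
  have hreach' : ∀ v ∈ N'.V, N'.Reach ρ v := by
    intro v hv
    obtain ⟨hvV, hvpa, hvpb⟩ := (hV'mem v).1 hv
    by_cases hva : v = a
    · subst hva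
      have hstep : (ua, v) ∈ N'.A := (hA'mem _).2 (Or.inl rfl)
      by_cases hρua : ρ = ua
      · rw [hρua]; exact arc_reach hstep
      · exact Relation.ReflTransGen.tail
          (htrans ua huane_pa huane_pb huane_a huane_b ρ (hρreach ua huaV) hρpa hρpb) hstep
    · by_cases hvb : v = b
      · subst hvb
        have hstep : (q, v) ∈ N'.A := (hA'mem _).2 (Or.inr (Or.inl rfl))
        by_cases hρq : ρ = q
        · rw [hρq]; exact arc_reach hstep
        · exact Relation.ReflTransGen.tail
            (htrans q hqpa hqne_pb hqne_a hqne_b ρ (hρreach q hqV) hρpa hρpb) hstep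
      · exact htrans v hvpa hvpb hva hvb ρ (hρreach v hvV) hρpa hρpb
  have hphylo : N'.IsPhylo X := by
    refine ⟨hac', ?_, ?_, ⟨ρ, hρV', ?_, ?_, hreach'⟩, ?_⟩
    · intro x hx
      refine (hV'mem x).2 ⟨h.X_sub hx, ?_, ?_⟩
      · intro hq0
        have h0 : N.outDeg pa = 0 := (h.leafSet pa hpaV).2 (hq0 ▸ hx)
        omega
      · intro hq0
        have h0 : N.outDeg pb = 0 := (h.leafSet pb hpbV).2 (hq0 ▸ hx)
        omega
    · intro v hv
      obtain ⟨hvV, hvpa, hvpb⟩ := (hV'mem v).1 hv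
      rw [houtEq v hvpa hvpb]
      exact h.leafSet v hvV
    · rw [hinEq ρ hρpa hρpb]; exact hρin
    · rw [houtEq ρ hρpa hρpb]; exact hρout
    · intro v hv
      obtain ⟨hvV, hvpa, hvpb⟩ := (hV'mem v).1 hv
      rw [hinEq v hvpa hvpb, houtEq v hvpa hvpb]
      exact h.degrees v hvV
  refine ⟨hphylo, ?_, ?_⟩
  · -- tree-sibling
    intro v hv h2
    obtain ⟨hvV, hvpa, hvpb⟩ := (hV'mem v).1 hv
    rw [hinEq v hvpa hvpb] at h2
    have hva : v ≠ a := by rintro rfl; omega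
    have hvb : v ≠ b := by rintro rfl; omega
    obtain ⟨p₀, w, hp₀v, hp₀w, hwv, hw⟩ := hts v hvV h2
    have harc1 : (p₀, v) ∈ N'.A := by
      rw [hA'mem]
      refine Or.inr (Or.inr ⟨hp₀v, ?_, ?_, ?_, ?_, ?_⟩)
      · exact fun hq1 => hvpb (congrArg Prod.snd hq1)
      · exact fun hq1 => hvpa (congrArg Prod.snd hq1)
      · exact fun hq1 => hva (congrArg Prod.snd hq1)
      · exact fun hq1 => hvpb (congrArg Prod.snd hq1)
      · exact fun hq1 => hvb (congrArg Prod.snd hq1)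
    have haV' : a ∈ N'.V := (hV'mem a).2 ⟨haV, Ne.symm hpane_a, Ne.symm hpbne_a⟩
    have haleaf' : N'.IsLeaf a :=
      ⟨haV', by rw [houtEq a (Ne.symm hpane_a) (Ne.symm hpbne_a)]; exact houta⟩
    have hwpb : w ≠ pb := by
      rintro rfl
      rcases hw with ⟨-, h1, -⟩ | ⟨-, h0⟩ <;> omega
    by_cases hcase : p₀ = ua ∧ w = pa
    · refine ⟨p₀, a, harc1, ?_, Ne.symm hva, Or.inr haleaf'⟩
      rw [hA'mem, hcase.1]
      exact Or.inl rfl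
    · have hp₀pa : p₀ ≠ pa := by
        rintro rfl
        rcases hchildpa v hp₀v with rfl | rfl
        · exact hva rfl
        · exact hvpb rfl
      have hp₀pb : p₀ ≠ pb := by
        rintro rfl
        exact hvb (hchildpb v hp₀v)
      have hwpa : w ≠ pa := by
        rintro rfl
        exact hcase ⟨hparpa p₀ hp₀w, rfl⟩
      have harc2 : (p₀, w) ∈ N'.A := by
        rw [hA'mem]
        refine Or.inr (Or.inr ⟨hp₀w, ?_, ?_, ?_, ?_, ?_⟩)
        · exact fun hq1 => hwpb (congrArg Prod.snd hq1)
        · exact fun hq1 => hwpa (congrArg Prod.snd hq1)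
        · exact fun hq1 => hp₀pa (congrArg Prod.fst hq1)
        · exact fun hq1 => hwpb (congrArg Prod.snd hq1)
        · exact fun hq1 => hp₀pb (congrArg Prod.fst hq1)
      refine ⟨p₀, w, harc1, harc2, hwv, ?_⟩
      rcases hw with ⟨hwV, hw1, hw2⟩ | ⟨hwV, hw0⟩
      · exact Or.inl ⟨(hV'mem w).2 ⟨hwV, hwpa, hwpb⟩,
          by rw [hinEq w hwpa hwpb]; exact hw1, by rw [houtEq w hwpa hwpb]; exact hw2⟩
      · exact Or.inr ⟨(hV'mem w).2 ⟨hwV, hwpa, hwpb⟩,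
          by rw [houtEq w hwpa hwpb]; exact hw0⟩
  · -- time-consistency
    obtain ⟨t, ht⟩ := htc
    refine ⟨t, ?_⟩
    intro x y hxy
    have hyV' : y ∈ N'.V := (N'.mem_V _ hxy).2
    obtain ⟨hyV, hypa, hypb⟩ := (hV'mem y).1 hyV'
    rw [hA'mem] at hxy
    rcases hxy with hq1 | hq1 | ⟨he, -, -, -, -, -⟩
    · simp only [Prod.mk.injEq] at hq1
      obtain ⟨rfl, rfl⟩ := hq1
      rw [hinEq y hypa hypb, hina]
      have h1 := (ht x pa huapa).2 (by omega)
      have h2 := (ht pa y hpaa).2 (by omega)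
      exact ⟨by omega, fun _ => by omega⟩
    · simp only [Prod.mk.injEq] at hq1
      obtain ⟨rfl, rfl⟩ := hq1
      rw [hinEq y hypa hypb, hinb]
      have h1 := (ht x pb hqpb).1 hpb2
      have h2 := (ht pb y hpbb).2 (by omega)
      exact ⟨by omega, fun _ => by omega⟩
    · rw [hinEq y hypa hypb]
      exact ht x y he

end Digraph'

open Digraph'

/-- a cherry reduction of a tree-sibling time-consistent network is
again a tree-sibling time-consistent network. -/
theorem stmt_7 (N N' : Digraph') (X : Finset ℕ) (a b : ℕ)
    (h : N.IsPhylo X) (hts : N.TreeSibling) (htc : N.TimeConsistent)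
    (hred : ReduceCherry N N' a b ∨ CutRetCherry N N' a b) :
    ((ReduceCherry N N' a b → (N'.IsPhylo (X.erase b) ∨ IsSingle N')) ∧
     (CutRetCherry N N' a b → N'.IsPhylo X)) ∧
    N'.TreeSibling ∧ N'.TimeConsistent := by
  rcases hred with hr | hr
  · obtain ⟨h1, h2, h3⟩ := reduce_aux h hts htc hr
    exact ⟨⟨fun _ => h1, fun hcut => (not_cherry_and_retcherry h hr.1 hcut.1).elim⟩, h2, h3⟩
  · obtain ⟨h1, h2, h3⟩ := cut_aux h hts htc hr
    exact ⟨⟨fun hredc => (not_cherry_and_retcherry h hredc.1 hr.1).elim, fun _ => h1⟩, h2, h3⟩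
end

section
/- Every tree-child phylogenetic network is an orchard network. -/
open Digraph'

/-!
Descending from the root through tree vertices, a tree-child network always reaches either a
cherry or a reticulated cherry: at a tree vertex `u`, the tree-child condition gives a child
`w` of in-degree one; if `w` is not a leaf we descend to it, and otherwise the other child of
`u` is a leaf (a cherry), a tree vertex (descend), or a reticulation whose child is a leaf (a
reticulated cherry, since `u` cannot be the root) or a tree vertex (descend). Reducing a cherry
or cutting a reticulated cherry suppresses vertices of in- and out-degree one, which keeps every
surviving degree and turns arcs into paths of the old network, so the result is again a
tree-child network with fewer vertices.
-/

open Finset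

namespace Finset

variable {α : Type*} [DecidableEq α] {s : Finset α} {P : α → Prop} [DecidablePred P] {x y : α}

theorem card_filter_erase_of_not (hx : ¬ P x) : #((s.erase x).filter P) = #(s.filter P) := by
  rw [filter_erase, erase_eq_of_notMem (by simp [hx])]

theorem card_filter_insert_erase (hx : x ∉ s) (hy : y ∈ s) (hxy : P x ↔ P y) :
    #((insert x (s.erase y)).filter P) = #(s.filter P) := by
  by_cases h : P y
  · rw [filter_insert, if_pos (hxy.2 h), card_insert_of_notMem (by simp [hx]), filter_erase,
      card_erase_add_one (mem_filter.2 ⟨hy, h⟩)]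
  · rw [filter_insert, if_neg (hxy.not.2 h), card_filter_erase_of_not h]

theorem eq_or_eq_of_card_eq_two (hs : #s = 2) {a b c : α} (ha : a ∈ s) (hb : b ∈ s) (hab : a ≠ b)
    (hc : c ∈ s) : c = a ∨ c = b := by
  obtain ⟨x, y, -, rfl⟩ := card_eq_two.1 hs
  simp only [mem_insert, mem_singleton] at ha hb hc
  grind

end Finset

namespace Relation

theorem wellFounded_flip_of_acyclic {α : Type*} {r : α → α → Prop} (s : Finset α)
    (hs : ∀ x y, r x y → x ∈ s) (hac : ∀ x y, r x y → ¬ ReflTransGen r y x) :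
    WellFounded (flip r) := by
  classical
  refine Subrelation.wf (r := InvImage (· < ·) fun x => #(s.filter (ReflTransGen r x ·)))
    (fun {y x} hxy => card_lt_card ?_) (InvImage.wf _ wellFounded_lt)
  refine (ssubset_iff_of_subset fun z hz => ?_).2
    ⟨x, mem_filter.2 ⟨hs x y hxy, .refl⟩, fun h => hac x y hxy (mem_filter.1 h).2⟩
  exact mem_filter.2 ⟨(mem_filter.1 hz).1, .head hxy (mem_filter.1 hz).2⟩

end Relation

def bypass {α : Type*} [DecidableEq α] (A : Finset (α × α)) (x m y : α) : Finset (α × α) :=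
  insert (x, y) ((A.erase (x, m)).erase (m, y))

section Bypass

variable {α : Type*} [DecidableEq α] {A : Finset (α × α)} {x m y : α}

@[simp]
theorem mem_bypass {e : α × α} :
    e ∈ bypass A x m y ↔ e = (x, y) ∨ e ≠ (m, y) ∧ e ≠ (x, m) ∧ e ∈ A := by
  simp [bypass]

theorem mem_bypass_self : (x, y) ∈ bypass A x m y :=
  mem_insert_self _ _

theorem mem_bypass_of_mem {v w : α} (h : (v, w) ∈ A) (hv : v ≠ m) (hw : w ≠ m) :
    (v, w) ∈ bypass A x m y := by
  simp [h, hv, hw]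

theorem transGen_of_mem_bypass (hxm : (x, m) ∈ A) (hmy : (m, y) ∈ A) {v w : α}
    (h : (v, w) ∈ bypass A x m y) : Relation.TransGen (fun a b => (a, b) ∈ A) v w := by
  rcases mem_bypass.1 h with h | ⟨-, -, h⟩
  · obtain ⟨rfl, rfl⟩ := Prod.mk.inj h
    exact .tail (.single hxm) hmy
  · exact .single h

theorem card_filter_fst_bypass (hxm : (x, m) ∈ A) (hxy : (x, y) ∉ A) (hne : x ≠ m) {v : α}
    (hv : m ≠ v) : #((bypass A x m y).filter (·.1 = v)) = #(A.filter (·.1 = v)) := by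
  rw [bypass, erase_right_comm, card_filter_insert_erase (by simp [hxy])
    (by simp [hxm, hne]) (by rfl), card_filter_erase_of_not (by simpa using hv)]

theorem card_filter_snd_bypass (hmy : (m, y) ∈ A) (hxy : (x, y) ∉ A) (hne : x ≠ m) {v : α}
    (hv : m ≠ v) : #((bypass A x m y).filter (·.2 = v)) = #(A.filter (·.2 = v)) := by
  rw [bypass, card_filter_insert_erase (by simp [hxy]) (by simp [hmy, hne.symm]) (by rfl),
    card_filter_erase_of_not (by simpa using hv)]

end Bypass

namespace Digraph'

variable {N : Digraph'}

theorem outDeg_ne_zero_of_mem {x y : ℕ} (h : (x, y) ∈ N.A) : N.outDeg x ≠ 0 :=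
  card_ne_zero_of_mem (mem_filter.2 ⟨h, rfl⟩)

theorem inDeg_ne_zero_of_mem {x y : ℕ} (h : (x, y) ∈ N.A) : N.inDeg y ≠ 0 :=
  card_ne_zero_of_mem (mem_filter.2 ⟨h, rfl⟩)

theorem exists_mem_of_inDeg_ne_zero {v : ℕ} (h : N.inDeg v ≠ 0) : ∃ u, (u, v) ∈ N.A := by
  obtain ⟨⟨u, w⟩, he⟩ := card_ne_zero.1 h
  rw [mem_filter] at he
  obtain ⟨he, rfl⟩ := he
  exact ⟨u, he⟩

theorem eq_of_inDeg_eq_one {v p q : ℕ} (h : N.inDeg v = 1) (hp : (p, v) ∈ N.A)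
    (hq : (q, v) ∈ N.A) : p = q :=
  congrArg Prod.fst (card_le_one.1 h.le _ (mem_filter.2 ⟨hp, rfl⟩) _ (mem_filter.2 ⟨hq, rfl⟩))

theorem eq_of_outDeg_eq_one {u c d : ℕ} (h : N.outDeg u = 1) (hc : (u, c) ∈ N.A)
    (hd : (u, d) ∈ N.A) : c = d :=
  congrArg Prod.snd (card_le_one.1 h.le _ (mem_filter.2 ⟨hc, rfl⟩) _ (mem_filter.2 ⟨hd, rfl⟩))

theorem eq_or_eq_of_inDeg_eq_two {v p q r : ℕ} (h : N.inDeg v = 2) (hp : (p, v) ∈ N.A)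
    (hq : (q, v) ∈ N.A) (hpq : p ≠ q) (hr : (r, v) ∈ N.A) : r = p ∨ r = q := by
  simpa using eq_or_eq_of_card_eq_two h (mem_filter.2 ⟨hp, rfl⟩) (mem_filter.2 ⟨hq, rfl⟩)
    (by simpa using hpq) (mem_filter.2 ⟨hr, rfl⟩)

theorem eq_or_eq_of_outDeg_eq_two {u a b c : ℕ} (h : N.outDeg u = 2) (ha : (u, a) ∈ N.A)
    (hb : (u, b) ∈ N.A) (hab : a ≠ b) (hc : (u, c) ∈ N.A) : c = a ∨ c = b := by
  simpa using eq_or_eq_of_card_eq_two h (mem_filter.2 ⟨ha, rfl⟩) (mem_filter.2 ⟨hb, rfl⟩)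
    (by simpa using hab) (mem_filter.2 ⟨hc, rfl⟩)

theorem exists_ne_of_inDeg_eq_two {v p : ℕ} (h : N.inDeg v = 2) (hp : (p, v) ∈ N.A) :
    ∃ q ≠ p, (q, v) ∈ N.A := by
  obtain ⟨⟨q, w⟩, hq, hne⟩ := exists_mem_ne (by omega : 1 < N.inDeg v) (p, v)
  rw [mem_filter] at hq
  obtain ⟨hq, rfl⟩ := hq
  exact ⟨q, by simpa using hne, hq⟩

theorem exists_ne_of_outDeg_eq_two {u w : ℕ} (h : N.outDeg u = 2) (hw : (u, w) ∈ N.A) :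
    ∃ x ≠ w, (u, x) ∈ N.A := by
  obtain ⟨⟨v, x⟩, hx, hne⟩ := exists_mem_ne (by omega : 1 < N.outDeg u) (u, w)
  rw [mem_filter] at hx
  obtain ⟨hx, rfl⟩ := hx
  exact ⟨x, by simpa using hne, hx⟩

theorem IsLeaf.not_mem {a y : ℕ} (ha : N.IsLeaf a) : (a, y) ∉ N.A :=
  fun h => outDeg_ne_zero_of_mem h ha.2

theorem IsLeaf.eq_of_reach {a x : ℕ} (ha : N.IsLeaf a) (h : N.Reach a x) : x = a := by
  rcases h.cases_head with rfl | ⟨c, hc, -⟩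
  · rfl
  · exact absurd hc ha.not_mem

theorem Acyclic.ne (hac : N.Acyclic) {u v : ℕ} (h : (u, v) ∈ N.A) : u ≠ v := by
  rintro rfl
  exact hac u u h .refl

theorem Acyclic.wellFounded_child (hac : N.Acyclic) : WellFounded fun v u => (u, v) ∈ N.A :=
  Relation.wellFounded_flip_of_acyclic N.V (fun _ _ h => (N.mem_V _ h).1) hac

theorem Acyclic.wellFounded_parent (hac : N.Acyclic) : WellFounded fun u v => (u, v) ∈ N.A :=
  Relation.wellFounded_flip_of_acyclic (r := fun x y => (y, x) ∈ N.A) N.V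
    (fun _ _ h => (N.mem_V _ h).2) fun x y h h' => hac y x h (Relation.reflTransGen_swap.1 h')

theorem Acyclic.reach_of_unique_source (hac : N.Acyclic) {ρ : ℕ}
    (hρ : ∀ v ∈ N.V, N.inDeg v = 0 → v = ρ) {v : ℕ} (hv : v ∈ N.V) : N.Reach ρ v := by
  induction v using hac.wellFounded_parent.induction with
  | _ v ih =>
  by_cases h0 : N.inDeg v = 0
  · rw [hρ v hv h0]
    exact .refl
  · obtain ⟨u, hu⟩ := exists_mem_of_inDeg_ne_zero h0
    exact (ih u hu (N.mem_V _ hu).1).tail hu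

/-- Reachability from the root is not part of the invariant: it follows from acyclicity and a
unique source (`Acyclic.reach_of_unique_source`), which is what survives cherry reductions. -/
structure IsTreeChildNetwork (N : Digraph') : Prop where
  acyclic : N.Acyclic
  degrees : ∀ v ∈ N.V,
    (N.inDeg v = 0 ∧ N.outDeg v = 2) ∨ (N.inDeg v = 1 ∧ N.outDeg v = 0) ∨
    (N.inDeg v = 1 ∧ N.outDeg v = 2) ∨ (N.inDeg v = 2 ∧ N.outDeg v = 1)
  root : ∃ ρ ∈ N.V, N.inDeg ρ = 0 ∧ ∀ v ∈ N.V, N.inDeg v = 0 → v = ρ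
  treeChild : N.TreeChild

theorem IsPhylo.isTreeChildNetwork {X : Finset ℕ} (h : N.IsPhylo X) (htc : N.TreeChild) :
    N.IsTreeChildNetwork where
  acyclic := h.acyclic
  degrees := h.degrees
  root := by
    obtain ⟨ρ, hρ, hρ0, -, hreach⟩ := h.root
    refine ⟨ρ, hρ, hρ0, fun v hv h0 => ?_⟩
    rcases (hreach v hv).cases_tail with rfl | ⟨u, -, hu⟩
    · rfl
    · exact absurd h0 (inDeg_ne_zero_of_mem hu)
  treeChild := htc

def CherryReducible (N : Digraph') : Prop :=
  ∃ N', N.CherryStep N' ∧ (N'.IsSingle ∨ (N'.IsTreeChildNetwork ∧ N'.V.card < N.V.card))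

namespace IsTreeChildNetwork

variable (G : N.IsTreeChildNetwork)
include G

theorem inDeg_eq_one_of_isLeaf {a : ℕ} (ha : N.IsLeaf a) : N.inDeg a = 1 := by
  have := ha.2
  rcases G.degrees a ha.1 with h | h | h | h <;> omega

theorem outDeg_eq_two_of_inDeg_le_one {v : ℕ} (hv : v ∈ N.V) (hin : N.inDeg v ≤ 1)
    (hout : N.outDeg v ≠ 0) : N.outDeg v = 2 := by
  rcases G.degrees v hv with h | h | h | h <;> omega

theorem inDeg_le_one_of_outDeg_eq_two {v : ℕ} (hv : v ∈ N.V) (h2 : N.outDeg v = 2) :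
    N.inDeg v ≤ 1 := by
  rcases G.degrees v hv with h | h | h | h <;> omega

theorem outDeg_eq_two_of_mem {p a b : ℕ} (ha : (p, a) ∈ N.A) (hb : (p, b) ∈ N.A) (hab : a ≠ b) :
    N.outDeg p = 2 := by
  have : 1 < N.outDeg p :=
    one_lt_card.2 ⟨_, mem_filter.2 ⟨ha, rfl⟩, _, mem_filter.2 ⟨hb, rfl⟩, by simpa using hab⟩
  rcases G.degrees p (N.mem_V _ ha).1 with h | h | h | h <;> omega

theorem inDeg_eq_one_of_mem_of_outDeg_eq_two {u p : ℕ} (hup : (u, p) ∈ N.A)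
    (h2 : N.outDeg p = 2) : N.inDeg p = 1 := by
  have hpV : p ∈ N.V := (N.mem_V _ hup).2
  have := G.inDeg_le_one_of_outDeg_eq_two hpV h2
  have := inDeg_ne_zero_of_mem hup
  omega

theorem exists_remove_two {r s : ℕ} {A' : Finset (ℕ × ℕ)}
    (hpath : ∀ x y, (x, y) ∈ A' → Relation.TransGen (fun u v => (u, v) ∈ N.A) x y)
    (havoid : ∀ x y, (x, y) ∈ A' → x ≠ r ∧ x ≠ s ∧ y ≠ r ∧ y ≠ s)
    (hr : N.inDeg r ≠ 0) (hs : N.inDeg s ≠ 0)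
    (hin : ∀ v, v ≠ r → v ≠ s → #(A'.filter (·.2 = v)) = N.inDeg v)
    (hout : ∀ v, v ≠ r → v ≠ s → #(A'.filter (·.1 = v)) = N.outDeg v)
    (htc : ∀ v, v ≠ r → v ≠ s → ∀ w, (v, w) ∈ N.A → N.inDeg w = 1 →
      ∃ w', (v, w') ∈ A' ∧ N.inDeg w' = 1) :
    ∃ N' : Digraph', N'.V = (N.V.erase r).erase s ∧ N'.A = A' ∧ N'.IsTreeChildNetwork ∧
      N'.V.card < N.V.card := by
  have mem_V' : ∀ {v}, v ∈ (N.V.erase r).erase s ↔ v ≠ s ∧ v ≠ r ∧ v ∈ N.V := by simp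
  let N' : Digraph' := ⟨(N.V.erase r).erase s, A', fun ⟨x, y⟩ h => by
    obtain ⟨c, hxc, -⟩ := Relation.TransGen.head'_iff.1 (hpath x y h)
    obtain ⟨d, -, hdy⟩ := Relation.TransGen.tail'_iff.1 (hpath x y h)
    obtain ⟨hxr, hxs, hyr, hys⟩ := havoid x y h
    exact ⟨mem_V'.2 ⟨hxs, hxr, (N.mem_V _ hxc).1⟩, mem_V'.2 ⟨hys, hyr, (N.mem_V _ hdy).2⟩⟩⟩
  have hin' : ∀ v ∈ N'.V, N'.inDeg v = N.inDeg v := fun v hv =>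
    hin v (mem_V'.1 hv).2.1 (mem_V'.1 hv).1
  have hout' : ∀ v ∈ N'.V, N'.outDeg v = N.outDeg v := fun v hv =>
    hout v (mem_V'.1 hv).2.1 (mem_V'.1 hv).1
  refine ⟨N', rfl, rfl, ⟨fun x y hxy hyx => ?_, fun v hv => ?_, ?_, fun v hv h0 => ?_⟩, ?_⟩
  · obtain ⟨c, hxc, hcy⟩ := Relation.TransGen.head'_iff.1 (hpath x y hxy)
    exact G.acyclic x c hxc <| hcy.trans <|
      Relation.reflTransGen_closed (fun u v h => (hpath u v h).to_reflTransGen) _ _ hyx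
  · rw [hin' v hv, hout' v hv]
    exact G.degrees v (mem_V'.1 hv).2.2
  · obtain ⟨ρ, hρ, hρ0, huniq⟩ := G.root
    have hρ' : ρ ∈ N'.V := mem_V'.2 ⟨fun h => hs (h ▸ hρ0), fun h => hr (h ▸ hρ0), hρ⟩
    exact ⟨ρ, hρ', (hin' ρ hρ').trans hρ0,
      fun v hv h0 => huniq v (mem_V'.1 hv).2.2 ((hin' v hv).symm.trans h0)⟩
  · obtain ⟨hvs, hvr, hvV⟩ := mem_V'.1 hv
    obtain ⟨w, hvw, hw⟩ := G.treeChild v hvV ((hout' v hv) ▸ h0)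
    obtain ⟨w', hvw', hw'⟩ := htc v hvr hvs w hvw hw
    exact ⟨w', hvw', (hin' w' (N'.mem_V _ hvw').2).trans hw'⟩
  · obtain ⟨u, hu⟩ := exists_mem_of_inDeg_ne_zero hr
    exact card_erase_le.trans_lt (card_erase_lt_of_mem (N.mem_V _ hu).2)

theorem reduceCherry_arcs_avoid {a b p u : ℕ} (hab : a ≠ b) (hb : N.IsLeaf b) (hpa : (p, a) ∈ N.A)
    (hpb : (p, b) ∈ N.A) (hup : (u, p) ∈ N.A) :
    ∀ x y, (x, y) ∈ bypass (N.A.erase (p, b)) u p a → x ≠ b ∧ x ≠ p ∧ y ≠ b ∧ y ≠ p := by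
  have hp2 : N.outDeg p = 2 := G.outDeg_eq_two_of_mem hpa hpb hab
  intro x y h
  rcases mem_bypass.1 h with he | ⟨h1, h2, hE⟩
  · obtain ⟨rfl, rfl⟩ := Prod.mk.inj he
    exact ⟨fun h => hb.not_mem (h ▸ hup), G.acyclic.ne hup, hab, (G.acyclic.ne hpa).symm⟩
  obtain ⟨h3, hA⟩ := mem_erase.1 hE
  refine ⟨?_, ?_, ?_, ?_⟩ <;> rintro rfl
  · exact hb.not_mem hA
  · rcases eq_or_eq_of_outDeg_eq_two hp2 hpa hpb hab hA with rfl | rfl <;> simp_all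
  · exact h3 (by rw [eq_of_inDeg_eq_one (G.inDeg_eq_one_of_isLeaf hb) hA hpb])
  · exact h2 (by rw [eq_of_inDeg_eq_one (G.inDeg_eq_one_of_mem_of_outDeg_eq_two hup hp2) hA hup])

theorem reduceCherry_arcs_treeChild {a b p u v : ℕ} (ha : N.IsLeaf a) (hup : (u, p) ∈ N.A)
    (hvp : v ≠ p) (w : ℕ) (hvw : (v, w) ∈ N.A) (hw : N.inDeg w = 1) :
    ∃ w', (v, w') ∈ bypass (N.A.erase (p, b)) u p a ∧ N.inDeg w' = 1 := by
  by_cases hwp : w = p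
  · subst hwp
    obtain rfl := eq_of_inDeg_eq_one hw hvw hup
    exact ⟨a, mem_bypass_self, G.inDeg_eq_one_of_isLeaf ha⟩
  · exact ⟨w, mem_bypass_of_mem (mem_erase.2 ⟨by simp [hvp], hvw⟩) hvp hwp, hw⟩

theorem exists_reduceCherry {a b p u : ℕ} (hab : a ≠ b) (ha : N.IsLeaf a) (hb : N.IsLeaf b)
    (hpa : (p, a) ∈ N.A) (hpb : (p, b) ∈ N.A) (hup : (u, p) ∈ N.A) :
    ∃ N', N.ReduceCherry N' a b ∧ N'.IsTreeChildNetwork ∧ N'.V.card < N.V.card := by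
  have ha1 := G.inDeg_eq_one_of_isLeaf ha
  have hup' : u ≠ p := G.acyclic.ne hup
  set E := N.A.erase (p, b)
  have huE : (u, p) ∈ E := mem_erase.2 ⟨by simp [hup'], hup⟩
  have haE : (p, a) ∈ E := mem_erase.2 ⟨by simp [hab], hpa⟩
  have huaE : (u, a) ∉ E := fun h => hup' (eq_of_inDeg_eq_one ha1 (mem_of_mem_erase h) hpa)
  obtain ⟨N', hV', hA', hN', hcard⟩ := G.exists_remove_two
    (fun x y h => Relation.TransGen.mono (fun _ _ => mem_of_mem_erase) _ _
      (transGen_of_mem_bypass huE haE h))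
    (G.reduceCherry_arcs_avoid hab hb hpa hpb hup) (inDeg_ne_zero_of_mem hpb) (inDeg_ne_zero_of_mem hup)
    (fun v hvb hvp => by
      rw [card_filter_snd_bypass haE huaE hup' hvp.symm,
        card_filter_erase_of_not (by simpa using hvb.symm)]; rfl)
    (fun v _ hvp => by
      rw [card_filter_fst_bypass huE huaE hup' hvp.symm,
        card_filter_erase_of_not (by simpa using hvp.symm)]; rfl)
    fun v _ hvp => G.reduceCherry_arcs_treeChild ha hup hvp
  refine ⟨N', ⟨⟨hab, ha, hb, p, hpa, hpb⟩, p, hpa, hpb, .inr ⟨u, hup, hV', ?_⟩⟩, hN', hcard⟩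
  rw [hA', bypass, erase_right_comm (a := (p, b)), erase_right_comm (a := (p, b))]

theorem cutRetCherry_arcs_avoid {a b pa pb ua q : ℕ} (ha : N.IsLeaf a) (hb : N.IsLeaf b)
    (hpaa : (pa, a) ∈ N.A) (hpbb : (pb, b) ∈ N.A) (hpb2 : N.inDeg pb = 2)
    (hpapb : (pa, pb) ∈ N.A) (hua : (ua, pa) ∈ N.A) (hq : (q, pb) ∈ N.A) (hqpa : q ≠ pa) :
    ∀ x y, (x, y) ∈ bypass (bypass (N.A.erase (pa, pb)) ua pa a) q pb b →
      x ≠ pa ∧ x ≠ pb ∧ y ≠ pa ∧ y ≠ pb := by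
  have hapb : a ≠ pb := fun h => ha.not_mem (h ▸ hpbb)
  have hpa2 := G.outDeg_eq_two_of_mem hpaa hpapb hapb
  have hpb1 : N.outDeg pb = 1 := by
    rcases G.degrees pb (N.mem_V _ hpbb).1 with h | h | h | h <;> omega
  intro x y h
  rcases mem_bypass.1 h with he | ⟨h1, h2, hI⟩
  · obtain ⟨rfl, rfl⟩ := Prod.mk.inj he
    exact ⟨hqpa, G.acyclic.ne hq, fun h => hb.not_mem (h ▸ hpaa), (G.acyclic.ne hpbb).symm⟩
  rcases mem_bypass.1 hI with he | ⟨h3, h4, hE⟩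
  · obtain ⟨rfl, rfl⟩ := Prod.mk.inj he
    exact ⟨G.acyclic.ne hua, fun h => G.acyclic _ _ hua (h ▸ .single hpapb),
      (G.acyclic.ne hpaa).symm, hapb⟩
  obtain ⟨h5, hA⟩ := mem_erase.1 hE
  refine ⟨?_, ?_, ?_, ?_⟩ <;> rintro rfl
  · rcases eq_or_eq_of_outDeg_eq_two hpa2 hpaa hpapb hapb hA with rfl | rfl <;> simp_all
  · exact h1 (by rw [eq_of_outDeg_eq_one hpb1 hA hpbb])
  · exact h4 (by rw [eq_of_inDeg_eq_one (G.inDeg_eq_one_of_mem_of_outDeg_eq_two hua hpa2) hA hua])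
  · rcases eq_or_eq_of_inDeg_eq_two hpb2 hpapb hq hqpa.symm hA with rfl | rfl <;> simp_all

theorem cutRetCherry_arcs_treeChild {a b pa pb ua q v : ℕ} (ha : N.IsLeaf a)
    (hpbb : (pb, b) ∈ N.A) (hpb2 : N.inDeg pb = 2) (hua : (ua, pa) ∈ N.A) (hvpa : v ≠ pa)
    (hvpb : v ≠ pb) (w : ℕ) (hvw : (v, w) ∈ N.A) (hw : N.inDeg w = 1) :
    ∃ w', (v, w') ∈ bypass (bypass (N.A.erase (pa, pb)) ua pa a) q pb b ∧ N.inDeg w' = 1 := by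
  by_cases hwpa : w = pa
  · subst hwpa
    obtain rfl := eq_of_inDeg_eq_one hw hvw hua
    exact ⟨a, mem_bypass_of_mem mem_bypass_self hvpb fun h => ha.not_mem (h ▸ hpbb),
      G.inDeg_eq_one_of_isLeaf ha⟩
  by_cases hwpb : w = pb
  · subst hwpb
    omega
  exact ⟨w, mem_bypass_of_mem (mem_bypass_of_mem (mem_erase.2 ⟨by simp [hvpa], hvw⟩) hvpa
    hwpa) hvpb hwpb, hw⟩

theorem exists_cutRetCherry {a b pa pb ua q : ℕ} (hab : a ≠ b) (ha : N.IsLeaf a)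
    (hb : N.IsLeaf b) (hpaa : (pa, a) ∈ N.A) (hpbb : (pb, b) ∈ N.A) (hpb2 : N.inDeg pb = 2)
    (hpapb : (pa, pb) ∈ N.A) (hua : (ua, pa) ∈ N.A) (hq : (q, pb) ∈ N.A) (hqpa : q ≠ pa) :
    ∃ N', N.CutRetCherry N' a b ∧ N'.IsTreeChildNetwork ∧ N'.V.card < N.V.card := by
  have ha1 := G.inDeg_eq_one_of_isLeaf ha
  have hb1 := G.inDeg_eq_one_of_isLeaf hb
  have hapb : a ≠ pb := fun h => ha.not_mem (h ▸ hpbb)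
  have huapa : ua ≠ pa := G.acyclic.ne hua
  have hqpb : q ≠ pb := G.acyclic.ne hq
  have hpbpa : pb ≠ pa := (G.acyclic.ne hpapb).symm
  set E := N.A.erase (pa, pb)
  set I := bypass E ua pa a
  have huE : (ua, pa) ∈ E := mem_erase.2 ⟨by simp [huapa], hua⟩
  have haE : (pa, a) ∈ E := mem_erase.2 ⟨by simp [hapb], hpaa⟩
  have huaE : (ua, a) ∉ E := fun h => huapa (eq_of_inDeg_eq_one ha1 (mem_of_mem_erase h) hpaa)
  have hqI : (q, pb) ∈ I := mem_bypass_of_mem (mem_erase.2 ⟨by simp [hqpa], hq⟩) hqpa hpbpa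
  have hbI : (pb, b) ∈ I :=
    mem_bypass_of_mem (mem_erase.2 ⟨by simp [hpbpa], hpbb⟩) hpbpa fun h => hb.not_mem (h ▸ hpaa)
  have hqbI : (q, b) ∉ I := by
    simp only [I, E, mem_bypass, mem_erase, not_or, not_and_or]
    exact ⟨by simp [hab.symm], .inr <| .inr <| .inr fun h => hqpb (eq_of_inDeg_eq_one hb1 h hpbb)⟩
  obtain ⟨N', hV', hA', hN', hcard⟩ := G.exists_remove_two
    (fun x y h => Relation.TransGen.closed (fun u v h => Relation.TransGen.mono
      (fun _ _ => mem_of_mem_erase) _ _ (transGen_of_mem_bypass huE haE h)) _ _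
      (transGen_of_mem_bypass hqI hbI h))
    (G.cutRetCherry_arcs_avoid ha hb hpaa hpbb hpb2 hpapb hua hq hqpa) (inDeg_ne_zero_of_mem hua)
    (by omega)
    (fun v hvpa hvpb => by
      rw [card_filter_snd_bypass hbI hqbI hqpb hvpb.symm,
        card_filter_snd_bypass haE huaE huapa hvpa.symm,
        card_filter_erase_of_not (by simpa using hvpb.symm)]; rfl)
    (fun v hvpa hvpb => by
      rw [card_filter_fst_bypass hqI hqbI hqpb hvpb.symm,
        card_filter_fst_bypass huE huaE huapa hvpa.symm,
        card_filter_erase_of_not (by simpa using hvpa.symm)]; rfl)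
    fun v hvpa hvpb => G.cutRetCherry_arcs_treeChild ha hpbb hpb2 hua hvpa hvpb
  refine ⟨N', ⟨⟨hab, ha, hb, pa, pb, hpaa, hpbb, hpb2, hpapb⟩, pa, pb, ua, q, hpaa, hpbb, hpb2,
    hpapb, hua, hq, hqpa, hV', ?_⟩, hN', hcard⟩
  simp only [hA', I, E, bypass]
  rw [erase_insert_of_ne (by simp [hapb]), erase_insert_of_ne (by simp [hab]), insert_comm]

theorem cherryReducible_of_cherry {a b p : ℕ} (hab : a ≠ b) (ha : N.IsLeaf a)
    (hb : N.IsLeaf b) (hpa : (p, a) ∈ N.A) (hpb : (p, b) ∈ N.A) : N.CherryReducible := by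
  by_cases h0 : N.inDeg p = 0
  · exact ⟨⟨{a}, ∅, by simp⟩, ⟨a, b, .inl ⟨⟨hab, ha, hb, p, hpa, hpb⟩, p, hpa, hpb,
      .inl ⟨h0, rfl, rfl⟩⟩⟩, .inl ⟨a, rfl, rfl⟩⟩
  · obtain ⟨u, hup⟩ := exists_mem_of_inDeg_ne_zero h0
    obtain ⟨N', hN', G', hcard⟩ := G.exists_reduceCherry hab ha hb hpa hpb hup
    exact ⟨N', ⟨a, b, .inl hN'⟩, .inr ⟨G', hcard⟩⟩

theorem cherryReducible_of_retCherry {a b pa pb : ℕ} (hab : a ≠ b) (ha : N.IsLeaf a)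
    (hb : N.IsLeaf b) (hpaa : (pa, a) ∈ N.A) (hpbb : (pb, b) ∈ N.A) (hpb2 : N.inDeg pb = 2)
    (hpapb : (pa, pb) ∈ N.A) : N.CherryReducible := by
  obtain ⟨q, hqpa, hq⟩ := exists_ne_of_inDeg_eq_two hpb2 hpapb
  -- if `pa` were the root it would reach `q`, but below `pa` there are only `a`, `pb` and `b`
  have hpa0 : N.inDeg pa ≠ 0 := by
    intro h0
    obtain ⟨ρ, -, -, huniq⟩ := G.root
    have hreach : N.Reach pa q := by
      rw [huniq pa (N.mem_V _ hpaa).1 h0]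
      exact G.acyclic.reach_of_unique_source huniq (N.mem_V _ hq).1
    rcases hreach.cases_head with rfl | ⟨c, hc, hcq⟩
    · exact hqpa rfl
    have hapb : a ≠ pb := fun h => ha.not_mem (h ▸ hpbb)
    rcases eq_or_eq_of_outDeg_eq_two (G.outDeg_eq_two_of_mem hpaa hpapb hapb) hpaa hpapb hapb hc
      with rfl | rfl
    · exact ha.not_mem (ha.eq_of_reach hcq ▸ hq)
    · exact G.acyclic q c hq hcq
  obtain ⟨ua, hua⟩ := exists_mem_of_inDeg_ne_zero hpa0
  obtain ⟨N', hN', G', hcard⟩ :=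
    G.exists_cutRetCherry hab ha hb hpaa hpbb hpb2 hpapb hua hq hqpa
  exact ⟨N', ⟨a, b, .inr hN'⟩, .inr ⟨G', hcard⟩⟩

theorem cherryReducible_of_outDeg_eq_two {u : ℕ} (hu : u ∈ N.V) (hu2 : N.outDeg u = 2) :
    N.CherryReducible := by
  induction u using G.acyclic.wellFounded_child.transGen.induction with
  | _ u ih =>
  obtain ⟨w, huw, hw1⟩ := G.treeChild u hu (by omega)
  obtain ⟨x, hxw, hux⟩ := exists_ne_of_outDeg_eq_two hu2 huw
  have hwV : w ∈ N.V := (N.mem_V _ huw).2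
  have hxV : x ∈ N.V := (N.mem_V _ hux).2
  by_cases hw0 : N.outDeg w ≠ 0
  · exact ih w (.single huw) hwV (G.outDeg_eq_two_of_inDeg_le_one hwV hw1.le hw0)
  have hw : N.IsLeaf w := ⟨hwV, not_not.1 hw0⟩
  by_cases hx0 : N.outDeg x = 0
  · exact G.cherryReducible_of_cherry hxw.symm hw ⟨hxV, hx0⟩ huw hux
  by_cases hx1 : N.inDeg x ≤ 1
  · exact ih x (.single hux) hxV (G.outDeg_eq_two_of_inDeg_le_one hxV hx1 hx0)
  have hx2 : N.inDeg x = 2 := by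
    rcases G.degrees x hxV with h | h | h | h <;> omega
  obtain ⟨y, hxy, hy1⟩ := G.treeChild x hxV hx0
  have hyV : y ∈ N.V := (N.mem_V _ hxy).2
  by_cases hy0 : N.outDeg y = 0
  · refine G.cherryReducible_of_retCherry ?_ hw ⟨hyV, hy0⟩ huw hxy hx2 hux
    rintro rfl
    exact G.acyclic.ne hux (eq_of_inDeg_eq_one hw1 huw hxy)
  · exact ih y (.head hxy (.single hux)) hyV (G.outDeg_eq_two_of_inDeg_le_one hyV hy1.le hy0)

end IsTreeChildNetwork

theorem IsTreeChildNetwork.isOrchard {N : Digraph'} (G : N.IsTreeChildNetwork) : N.IsOrchard := by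
  obtain ⟨ρ, hρ, hρ0, -⟩ := G.root
  have hρ2 : N.outDeg ρ = 2 := by
    rcases G.degrees ρ hρ with h | h | h | h <;> omega
  obtain ⟨N', hstep, hN' | ⟨G', hcard⟩⟩ := G.cherryReducible_of_outDeg_eq_two hρ hρ2
  · exact ⟨N', .single hstep, hN'⟩
  · obtain ⟨N'', hsteps, hN''⟩ := G'.isOrchard
    exact ⟨N'', .head hstep hsteps, hN''⟩
termination_by N.V.card

end Digraph'

open Digraph'

/-- every tree-child phylogenetic network is an orchard network. -/
theorem stmt_9 (N : Digraph') (X : Finset ℕ)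
    (h : N.IsPhylo X) (htc : N.TreeChild) :
    N.IsOrchard :=
  (h.isTreeChildNetwork htc).isOrchard
end

section
/- Every tree-child phylogenetic network with n leaves has at most n − 1 reticulation vertices. -/
open Digraph'

/-! Call an arc a tree arc if it enters a vertex of in-degree one. Since a tree-child network
has a tree arc out of every non-leaf vertex, following tree arcs downwards from any vertex
ends at a leaf. An in-degree-one vertex has a unique parent, so the tree paths ending at a
fixed leaf form a chain, and at most one of them starts at a vertex of in-degree other than
one. Hence sending the root and each reticulation to a leaf reached by a tree path is
injective. -/

namespace Digraph'

def TreeArc (N : Digraph') (u v : ℕ) : Prop := (u, v) ∈ N.A ∧ N.inDeg v = 1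

def TreePath (N : Digraph') : ℕ → ℕ → Prop := Relation.ReflTransGen N.TreeArc

open Classical in
noncomputable def descendants (N : Digraph') (v : ℕ) : Finset ℕ := N.V.filter (N.Reach v)

def leaves (N : Digraph') : Finset ℕ := N.V.filter (fun v => N.outDeg v = 0)

variable {N : Digraph'}

theorem eq_of_mem_A_of_inDeg_eq_one {u u' v : ℕ} (hu : (u, v) ∈ N.A) (hu' : (u', v) ∈ N.A)
    (hv : N.inDeg v = 1) : u = u' :=
  congrArg Prod.fst <|
    Finset.card_le_one.mp hv.le (u, v) (by simp [hu]) (u', v) (by simp [hu'])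

theorem TreePath.total {u v l : ℕ} (hu : N.TreePath u l) (hv : N.TreePath v l) :
    N.TreePath u v ∨ N.TreePath v u := by
  induction hv generalizing u with
  | refl => exact Or.inl hu
  | @tail w l hvw hwl ih =>
    rcases hu.cases_tail with rfl | ⟨w', huw', hw'l⟩
    · exact Or.inr (hvw.tail hwl)
    · obtain rfl := eq_of_mem_A_of_inDeg_eq_one hw'l.1 hwl.1 hwl.2
      exact ih huw'

theorem TreePath.eq_of_inDeg_ne_one {u v : ℕ} (h : N.TreePath u v) (hv : N.inDeg v ≠ 1) :
    u = v := by
  rcases h.cases_tail with rfl | ⟨_, _, hwv⟩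
  · rfl
  · exact absurd hwv.2 hv

theorem eq_of_treePath_of_inDeg_ne_one {u v l : ℕ} (hu : N.TreePath u l) (hv : N.TreePath v l)
    (hu1 : N.inDeg u ≠ 1) (hv1 : N.inDeg v ≠ 1) : u = v := by
  rcases hu.total hv with huv | hvu
  · exact huv.eq_of_inDeg_ne_one hv1
  · exact (hvu.eq_of_inDeg_ne_one hu1).symm

theorem descendants_ssubset (hac : N.Acyclic) {v w : ℕ} (hvw : (v, w) ∈ N.A) :
    N.descendants w ⊂ N.descendants v := by
  refine (Finset.ssubset_iff_of_subset fun u hu => ?_).mpr ⟨v, ?_, ?_⟩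
  · simp only [descendants, Finset.mem_filter] at hu ⊢
    exact ⟨hu.1, .head hvw hu.2⟩
  · simpa [descendants] using ⟨(N.mem_V _ hvw).1, Relation.ReflTransGen.refl⟩
  · simpa [descendants] using fun _ => hac v w hvw

theorem exists_treePath_to_leaf (hac : N.Acyclic) (htc : N.TreeChild) {v : ℕ} (hv : v ∈ N.V) :
    ∃ l ∈ N.leaves, N.TreePath v l := by
  by_cases hout : N.outDeg v = 0
  · exact ⟨v, Finset.mem_filter.mpr ⟨hv, hout⟩, .refl⟩
  obtain ⟨w, hvw, hw⟩ := htc v hv hout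
  obtain ⟨l, hl, hwl⟩ := exists_treePath_to_leaf hac htc (N.mem_V _ hvw).2
  exact ⟨l, hl, .head ⟨hvw, hw⟩ hwl⟩
termination_by (N.descendants v).card
decreasing_by exact Finset.card_lt_card (descendants_ssubset hac hvw)

theorem card_le_card_leaves (hac : N.Acyclic) (htc : N.TreeChild) {T : Finset ℕ}
    (hTV : T ⊆ N.V) (hT : ∀ v ∈ T, N.inDeg v ≠ 1) : T.card ≤ N.leaves.card :=
  Finset.card_le_card_of_forall_subsingleton N.TreePath
    (fun _ hv => exists_treePath_to_leaf hac htc (hTV hv))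
    (fun _ _ _ ⟨hu, hul⟩ _ ⟨hv, hvl⟩ => eq_of_treePath_of_inDeg_ne_one hul hvl (hT _ hu) (hT _ hv))

theorem IsPhylo.leaves_eq {X : Finset ℕ} (h : N.IsPhylo X) : N.leaves = X := by
  ext v
  simp only [leaves, Finset.mem_filter]
  exact ⟨fun ⟨hv, hv0⟩ => (h.leafSet v hv).mp hv0,
    fun hv => ⟨h.X_sub hv, (h.leafSet v (h.X_sub hv)).mpr hv⟩⟩

end Digraph'

/-- a tree-child phylogenetic network with `n` leaves has at most
`n - 1` reticulations. -/
theorem stmt_10 (N : Digraph') (X : Finset ℕ)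
    (h : N.IsPhylo X) (htc : N.TreeChild) :
    (N.V.filter (fun v => N.inDeg v = 2 ∧ N.outDeg v = 1)).card ≤ X.card - 1 := by
  obtain ⟨ρ, hρV, hρin, -⟩ := h.root
  set R := N.V.filter (fun v => N.inDeg v = 2 ∧ N.outDeg v = 1)
  have hρR : ρ ∉ R := by
    simp only [R, Finset.mem_filter]
    omega
  have hbound := card_le_card_leaves h.acyclic htc (T := insert ρ R)
    (Finset.insert_subset hρV (Finset.filter_subset _ _)) <| by
      simp only [R, Finset.mem_insert, Finset.mem_filter]
      rintro v (rfl | ⟨-, hv2, -⟩) <;> omega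
  rw [Finset.card_insert_of_notMem hρR, h.leaves_eq] at hbound
  omega
end
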